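/- arXiv:2206.10130 — 11 statements merged into one kernel-verified Lean document; each statement's English description precedes it below -/
import Mathlib

section
/- Let c ≥ 2 and let 0 ≤ a_1 < a_2 < ... < a_c < n be integers. Let q be a natural number such that n ≤ (2(c−1)/c) · (p_q#)^{1/binom(c,2)}. Then there exists a prime p ≤ p_q such that the residues a_1 mod p, ..., a_c mod p are pairwise distinct. -/
/-- The `q`-th prime number, with `nthPrime 1 = 2`, `nthPrime 2 = 3`, etc. -/
noncomputable def nthPrime (q : ℕ) : ℕ := Nat.nth Nat.Prime (q - 1)

/-- The primorial `p_q# `: the product of the first `q` primes. -/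
noncomputable def primorialOfNthPrime (q : ℕ) : ℕ := ∏ i ∈ Finset.range q, Nat.nth Nat.Prime i

lemma aux_card_pairs (c : ℕ) :
    ((Finset.univ : Finset (Fin c × Fin c)).filter (fun p => p.1 < p.2)).card = c.choose 2 := by
  have h1 : ((Finset.univ : Finset (Fin c × Fin c)).filter (fun p => p.1 < p.2)).card
      = ∑ j : Fin c, (j : ℕ) := by
    rw [Finset.card_filter, Fintype.sum_prod_type_right]
    refine Finset.sum_congr rfl fun j _ => ?_
    rw [← Finset.card_filter]
    have h2 : (Finset.univ.filter (fun i : Fin c => i < j)) = Finset.Iio j := by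
      ext i; simp
    rw [h2, Fin.card_Iio]
  rw [h1, Fin.sum_univ_eq_sum_range (fun i => i), Finset.sum_range_id, Nat.choose_two_right]

lemma aux_card_cond (c m : ℕ) (hm : m < c - 1) :
    ((Finset.univ : Finset (Fin c × Fin c)).filter
      (fun p => (p.1 : ℕ) ≤ m ∧ m < (p.2 : ℕ))).card = (m + 1) * (c - 1 - m) := by
  have hsplit : ((Finset.univ : Finset (Fin c × Fin c)).filter
      (fun p => (p.1 : ℕ) ≤ m ∧ m < (p.2 : ℕ)))
      = (Finset.univ.filter (fun i : Fin c => (i : ℕ) ≤ m)) ×ˢ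
        (Finset.univ.filter (fun j : Fin c => m < (j : ℕ))) := by
    ext p
    simp [Finset.mem_product, Finset.mem_filter]
  rw [hsplit, Finset.card_product]
  have hA : (Finset.univ.filter (fun i : Fin c => (i : ℕ) ≤ m)).card = m + 1 := by
    rw [Finset.card_filter, Fin.sum_univ_eq_sum_range (fun k => if k ≤ m then 1 else 0),
      ← Finset.card_filter]
    have : (Finset.range c).filter (fun k => k ≤ m) = Finset.range (m + 1) := by
      ext k; simp only [Finset.mem_filter, Finset.mem_range]; omega
    rw [this, Finset.card_range]
  have hB : (Finset.univ.filter (fun j : Fin c => m < (j : ℕ))).card = c - 1 - m := by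
    rw [Finset.card_filter, Fin.sum_univ_eq_sum_range (fun k => if m < k then 1 else 0),
      ← Finset.card_filter]
    have : (Finset.range c).filter (fun k => m < k) = Finset.Ico (m + 1) c := by
      ext k; simp only [Finset.mem_filter, Finset.mem_range, Finset.mem_Ico]; omega
    rw [this, Nat.card_Ico]
    omega
  rw [hA, hB]

lemma aux_telescope (A : ℕ → ℝ) {i j : ℕ} (hij : i ≤ j) :
    ∑ m ∈ Finset.Ico i j, (A (m + 1) - A m) = A j - A i := by
  rw [Finset.sum_Ico_eq_sub _ hij, Finset.sum_range_sub, Finset.sum_range_sub]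
  ring

lemma aux_sum_bound (c : ℕ) (hc : 2 ≤ c) (n : ℕ) (a : Fin c → ℕ)
    (ha : StrictMono a) (han : ∀ i, a i < n) :
    ∑ p ∈ (Finset.univ : Finset (Fin c × Fin c)).filter (fun p => p.1 < p.2),
      ((a p.2 : ℝ) - (a p.1 : ℝ)) ≤ (c : ℝ) ^ 2 * ((n : ℝ) - 1) / 4 := by
  set A : ℕ → ℝ := fun k => if h : k < c then (a ⟨k, h⟩ : ℝ) else 0 with hA
  have hAval : ∀ i : Fin c, A (i : ℕ) = (a i : ℝ) := by
    intro i
    simp only [hA, dif_pos i.isLt]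
  have hgnonneg : ∀ m, m < c - 1 → 0 ≤ A (m + 1) - A m := by
    intro m hm
    have h1 : m + 1 < c := by omega
    have h0 : m < c := by omega
    have hlt : a ⟨m, h0⟩ < a ⟨m + 1, h1⟩ := ha (by simp [Fin.lt_def])
    simp only [hA, dif_pos h1, dif_pos h0]
    have : (a ⟨m, h0⟩ : ℝ) < (a ⟨m + 1, h1⟩ : ℝ) := by exact_mod_cast hlt
    linarith
  have key : ∑ p ∈ (Finset.univ : Finset (Fin c × Fin c)).filter (fun p => p.1 < p.2),
      ((a p.2 : ℝ) - (a p.1 : ℝ))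
      = ∑ m ∈ Finset.range (c - 1), (((m + 1) * (c - 1 - m) : ℕ) : ℝ) * (A (m + 1) - A m) := by
    calc ∑ p ∈ (Finset.univ : Finset (Fin c × Fin c)).filter (fun p => p.1 < p.2),
          ((a p.2 : ℝ) - (a p.1 : ℝ))
        = ∑ p ∈ (Finset.univ : Finset (Fin c × Fin c)).filter (fun p => p.1 < p.2),
          ∑ m ∈ Finset.Ico (p.1 : ℕ) (p.2 : ℕ), (A (m + 1) - A m) := by
          refine Finset.sum_congr rfl fun p hp => ?_
          have hp' : p.1 < p.2 := (Finset.mem_filter.mp hp).2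
          rw [aux_telescope A (le_of_lt hp'), hAval, hAval]
      _ = ∑ p ∈ (Finset.univ : Finset (Fin c × Fin c)).filter (fun p => p.1 < p.2),
          ∑ m ∈ Finset.range (c - 1),
            (if (p.1 : ℕ) ≤ m ∧ m < (p.2 : ℕ) then A (m + 1) - A m else 0) := by
          refine Finset.sum_congr rfl fun p hp => ?_
          rw [← Finset.sum_filter]
          apply Finset.sum_congr _ (fun _ _ => rfl)
          ext m
          simp only [Finset.mem_Ico, Finset.mem_filter, Finset.mem_range]
          have h2 := p.2.isLt
          omega
      _ = ∑ m ∈ Finset.range (c - 1),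
          ∑ p ∈ (Finset.univ : Finset (Fin c × Fin c)).filter (fun p => p.1 < p.2),
            (if (p.1 : ℕ) ≤ m ∧ m < (p.2 : ℕ) then A (m + 1) - A m else 0) :=
          Finset.sum_comm
      _ = ∑ m ∈ Finset.range (c - 1), (((m + 1) * (c - 1 - m) : ℕ) : ℝ) * (A (m + 1) - A m) := by
          refine Finset.sum_congr rfl fun m hm => ?_
          rw [← Finset.sum_filter, Finset.sum_const, nsmul_eq_mul]
          congr 1
          rw [Finset.filter_filter]
          have hfe : ((Finset.univ : Finset (Fin c × Fin c)).filter
              (fun p => p.1 < p.2 ∧ ((p.1 : ℕ) ≤ m ∧ m < (p.2 : ℕ))))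
              = (Finset.univ : Finset (Fin c × Fin c)).filter
                (fun p => (p.1 : ℕ) ≤ m ∧ m < (p.2 : ℕ)) := by
            ext p
            simp only [Finset.mem_filter, Finset.mem_univ, true_and, Fin.lt_def]
            omega
          rw [hfe, aux_card_cond c m (Finset.mem_range.mp hm)]
  rw [key]
  have hbound : ∀ m ∈ Finset.range (c - 1),
      (((m + 1) * (c - 1 - m) : ℕ) : ℝ) * (A (m + 1) - A m)
        ≤ (c : ℝ) ^ 2 / 4 * (A (m + 1) - A m) := by
    intro m hm
    have hm' := Finset.mem_range.mp hm
    refine mul_le_mul_of_nonneg_right ?_ (hgnonneg m hm')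
    have hmc : m ≤ c - 1 := by omega
    have h1c : 1 ≤ c := by omega
    push_cast [Nat.cast_sub hmc, Nat.cast_sub h1c]
    nlinarith [sq_nonneg ((c : ℝ) - 1 - (m : ℝ) - ((m : ℝ) + 1))]
  calc ∑ m ∈ Finset.range (c - 1), (((m + 1) * (c - 1 - m) : ℕ) : ℝ) * (A (m + 1) - A m)
      ≤ ∑ m ∈ Finset.range (c - 1), (c : ℝ) ^ 2 / 4 * (A (m + 1) - A m) :=
        Finset.sum_le_sum hbound
    _ = (c : ℝ) ^ 2 / 4 * (A (c - 1) - A 0) := by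
        rw [← Finset.mul_sum, Finset.sum_range_sub]
    _ ≤ (c : ℝ) ^ 2 * ((n : ℝ) - 1) / 4 := by
        have h0c : 0 < c := by omega
        have h1c : c - 1 < c := by omega
        have h0 : A 0 = (a ⟨0, h0c⟩ : ℝ) := by simp only [hA, dif_pos h0c]
        have h1 : A (c - 1) = (a ⟨c - 1, h1c⟩ : ℝ) := by simp only [hA, dif_pos h1c]
        have hupper : (a ⟨c - 1, h1c⟩ : ℝ) ≤ (n : ℝ) - 1 := by
          have h2 : a ⟨c - 1, h1c⟩ + 1 ≤ n := han ⟨c - 1, h1c⟩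
          have h3 : ((a ⟨c - 1, h1c⟩ : ℕ) : ℝ) + 1 ≤ (n : ℝ) := by exact_mod_cast h2
          linarith
        have hlower : (0 : ℝ) ≤ (a ⟨0, h0c⟩ : ℝ) := Nat.cast_nonneg _
        rw [h0, h1]
        nlinarith [sq_nonneg (c : ℝ)]

/-- If `0 ≤ a 0 < a 1 < ⋯ < a (c-1) < n` are integers (`c ≥ 2`) and `q ≥ 1` is such that
`n ≤ (2(c-1)/c) · (p_q#)^(1/C(c,2))`, then there is a prime `p ≤ p_q` modulo which
the `a i` are pairwise distinct. -/
theorem exists_prime_residues_distinct (c : ℕ) (hc : 2 ≤ c) (n : ℕ)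
    (a : Fin c → ℕ) (ha : StrictMono a) (han : ∀ i, a i < n)
    (q : ℕ) (hq : 1 ≤ q)
    (hn : (n : ℝ) ≤ 2 * ((c : ℝ) - 1) / (c : ℝ) *
      (primorialOfNthPrime q : ℝ) ^ ((c.choose 2 : ℝ))⁻¹) :
    ∃ p : ℕ, p.Prime ∧ p ≤ nthPrime q ∧
      ∀ i j : Fin c, a i % p = a j % p → i = j := by
  by_contra hcon
  push_neg at hcon
  set C := c.choose 2 with hCdef
  have hCpos : 0 < C := Nat.choose_pos hc
  set s : Finset (Fin c × Fin c) :=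
    (Finset.univ : Finset (Fin c × Fin c)).filter (fun p => p.1 < p.2) with hsdef
  have hscard : s.card = C := aux_card_pairs c
  set D : ℕ := ∏ p ∈ s, (a p.2 - a p.1) with hDdef
  have hDpos : 0 < D := by
    refine Finset.prod_pos fun p hp => ?_
    have hp' : p.1 < p.2 := (Finset.mem_filter.mp hp).2
    have := ha hp'
    omega
  -- every prime up to nthPrime q divides D
  have hdvd : ∀ p : ℕ, p.Prime → p ≤ nthPrime q → p ∣ D := by
    intro p hp hple
    obtain ⟨i, j, hmod, hij⟩ := hcon p hp hple
    rcases lt_or_gt_of_ne hij with h | h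
    · have h1 : p ∣ a j - a i := (Nat.modEq_iff_dvd' (ha h).le).mp hmod
      exact h1.trans (Finset.dvd_prod_of_mem _
        (Finset.mem_filter.mpr ⟨Finset.mem_univ (i, j), h⟩))
    · have h1 : p ∣ a i - a j := (Nat.modEq_iff_dvd' (ha h).le).mp hmod.symm
      exact h1.trans (Finset.dvd_prod_of_mem _
        (Finset.mem_filter.mpr ⟨Finset.mem_univ (j, i), h⟩))
  have himg : primorialOfNthPrime q = ∏ p ∈ (Finset.range q).image (Nat.nth Nat.Prime), p := by
    rw [primorialOfNthPrime, Finset.prod_image]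
    intro x _ y _ h
    exact Nat.nth_injective Nat.infinite_setOf_prime h
  have hPdvd : primorialOfNthPrime q ∣ D := by
    rw [himg]
    refine Finset.prod_primes_dvd D ?_ ?_
    · intro p hp
      obtain ⟨i, _, rfl⟩ := Finset.mem_image.mp hp
      exact (Nat.prime_nth_prime i).prime
    · intro p hp
      obtain ⟨i, hi, rfl⟩ := Finset.mem_image.mp hp
      refine hdvd _ (Nat.prime_nth_prime i) ?_
      have hi' : i ≤ q - 1 := by
        have := Finset.mem_range.mp hi
        omega
      exact (Nat.nth_le_nth Nat.infinite_setOf_prime).mpr hi'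
  have hPD : primorialOfNthPrime q ≤ D := Nat.le_of_dvd hDpos hPdvd
  -- real estimates
  set P := primorialOfNthPrime q with hPdef
  have hc0 : (0 : ℝ) < (c : ℝ) := by positivity
  have hc2 : (2 : ℝ) ≤ (c : ℝ) := by exact_mod_cast hc
  have hc1 : (0 : ℝ) < (c : ℝ) - 1 := by linarith
  have hn1 : 1 ≤ n := by have := han ⟨0, by omega⟩; omega
  have hn1' : (1 : ℝ) ≤ (n : ℝ) := by exact_mod_cast hn1
  have hCne : ((C : ℝ)) ≠ 0 := by
    have : (0 : ℝ) < (C : ℝ) := by exact_mod_cast hCpos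
    linarith
  -- lower bound for P
  have hr : (c : ℝ) * (n : ℝ) / (2 * ((c : ℝ) - 1)) ≤ (P : ℝ) ^ ((C : ℝ))⁻¹ := by
    rw [div_le_iff₀ (by positivity)]
    rw [div_mul_eq_mul_div, le_div_iff₀ hc0] at hn
    nlinarith [hn]
  have hrpowC : ((P : ℝ) ^ ((C : ℝ))⁻¹) ^ C = (P : ℝ) := by
    rw [← Real.rpow_natCast ((P : ℝ) ^ ((C : ℝ))⁻¹) C, ← Real.rpow_mul (Nat.cast_nonneg P),
      inv_mul_cancel₀ hCne, Real.rpow_one]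
  have hPlb : ((c : ℝ) * (n : ℝ) / (2 * ((c : ℝ) - 1))) ^ C ≤ (P : ℝ) := by
    calc ((c : ℝ) * (n : ℝ) / (2 * ((c : ℝ) - 1))) ^ C
        ≤ ((P : ℝ) ^ ((C : ℝ))⁻¹) ^ C := pow_le_pow_left₀ (by positivity) hr C
      _ = (P : ℝ) := hrpowC
  -- AM-GM upper bound for D
  set z : Fin c × Fin c → ℝ := fun p => (a p.2 : ℝ) - (a p.1 : ℝ) with hzdef
  have hznn : ∀ p ∈ s, 0 ≤ z p := by
    intro p hp
    have hp' : p.1 < p.2 := (Finset.mem_filter.mp hp).2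
    have := (ha hp').le
    have : ((a p.1 : ℕ) : ℝ) ≤ ((a p.2 : ℕ) : ℝ) := by exact_mod_cast this
    simp only [hzdef]
    linarith
  set S : ℝ := ∑ p ∈ s, z p with hSdef
  have hSnn : 0 ≤ S := Finset.sum_nonneg hznn
  have hprodD : ∏ p ∈ s, z p = (D : ℝ) := by
    rw [hDdef, Nat.cast_prod]
    refine Finset.prod_congr rfl fun p hp => ?_
    have hp' : p.1 < p.2 := (Finset.mem_filter.mp hp).2
    rw [Nat.cast_sub (ha hp').le]
  have amgm := Real.geom_mean_le_arith_mean_weighted s (fun _ => (C : ℝ)⁻¹) z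
    (fun _ _ => by positivity)
    (by rw [Finset.sum_const, hscard, nsmul_eq_mul, mul_inv_cancel₀ hCne]) hznn
  rw [Real.finset_prod_rpow s z hznn, hprodD] at amgm
  have hsum : ∑ p ∈ s, (C : ℝ)⁻¹ * z p = (C : ℝ)⁻¹ * S := by
    rw [hSdef, Finset.mul_sum]
  rw [hsum] at amgm
  -- raise to the C-th power
  have hDcast : ((D : ℝ) ^ ((C : ℝ))⁻¹) ^ C = (D : ℝ) := by
    rw [← Real.rpow_natCast ((D : ℝ) ^ ((C : ℝ))⁻¹) C, ← Real.rpow_mul (Nat.cast_nonneg D),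
      inv_mul_cancel₀ hCne, Real.rpow_one]
  have hDub : (D : ℝ) ≤ ((C : ℝ)⁻¹ * S) ^ C := by
    calc (D : ℝ) = ((D : ℝ) ^ ((C : ℝ))⁻¹) ^ C := hDcast.symm
      _ ≤ ((C : ℝ)⁻¹ * S) ^ C :=
        pow_le_pow_left₀ (Real.rpow_nonneg (Nat.cast_nonneg D) _) amgm C
  -- bound the arithmetic mean
  have hSb : S ≤ (c : ℝ) ^ 2 * ((n : ℝ) - 1) / 4 := aux_sum_bound c hc n a ha han
  have hCval : (C : ℝ) = (c : ℝ) * ((c : ℝ) - 1) / 2 := Nat.cast_choose_two (K := ℝ) c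
  have hb1 : (C : ℝ)⁻¹ * S ≤ (c : ℝ) * ((n : ℝ) - 1) / (2 * ((c : ℝ) - 1)) := by
    rw [inv_mul_le_iff₀ (by rw [hCval]; positivity)]
    rw [hCval]
    have heq : (c : ℝ) * ((c : ℝ) - 1) / 2 * ((c : ℝ) * ((n : ℝ) - 1) / (2 * ((c : ℝ) - 1)))
        = (c : ℝ) ^ 2 * ((n : ℝ) - 1) / 4 := by
      field_simp
      ring
    rw [heq]
    exact hSb
  have hb2 : (c : ℝ) * ((n : ℝ) - 1) / (2 * ((c : ℝ) - 1))
      < (c : ℝ) * (n : ℝ) / (2 * ((c : ℝ) - 1)) := by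
    have hd : (0 : ℝ) < 2 * ((c : ℝ) - 1) := by positivity
    rw [div_lt_div_iff₀ hd hd]
    nlinarith
  -- final chain
  have hchain1 : ((C : ℝ)⁻¹ * S) ^ C ≤ ((c : ℝ) * ((n : ℝ) - 1) / (2 * ((c : ℝ) - 1))) ^ C :=
    pow_le_pow_left₀ (by positivity) hb1 C
  have hchain2 : ((c : ℝ) * ((n : ℝ) - 1) / (2 * ((c : ℝ) - 1))) ^ C
      < ((c : ℝ) * (n : ℝ) / (2 * ((c : ℝ) - 1))) ^ C :=
    pow_lt_pow_left₀ hb2 (by apply div_nonneg (by nlinarith) (by positivity)) hCpos.ne'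
  have hPDr : (P : ℝ) ≤ (D : ℝ) := by exact_mod_cast hPD
  linarith
end

section
/- Let Σ be a finite alphabet, let α ≥ 1 be a rational number, and let x ∈ Σ* be an α-power, i.e., x = z^α for some nonempty word z, meaning |x| = α·|z| is an integer and x is a prefix of the infinite word zzz···. Then A_N(x) ≤ |x|/α. -/
/-- A nondeterministic finite automaton with state set `Fin m` over alphabet `σ`. -/
structure NFAc (σ : Type) (m : ℕ) where
  start : Fin m
  accept : Fin m → Prop
  step : Fin m → σ → Fin m → Prop

/-- `M.RunFrom p y l` : `l` is the sequence of states of an accepting run of `M`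
on the word `y`, starting at state `p` (so `l` lists the `y.length + 1` visited
states, the last one being an accepting state). -/
def NFAc.RunFrom {σ : Type} {m : ℕ} (M : NFAc σ m) : Fin m → List σ → List (Fin m) → Prop
  | p, [], l => l = [p] ∧ M.accept p
  | p, a :: y, l => ∃ q l', M.step p a q ∧ NFAc.RunFrom M q y l' ∧ l = p :: l'

/-- `M` accepts `x`, and there is exactly one accepting path of `M` of length `x.length`
(counting both the word read and the sequence of states traversed). -/
def NFAc.UniquelyAccepts {σ : Type} {m : ℕ} (M : NFAc σ m) (x : List σ) : Prop :=
  (∃ l, M.RunFrom M.start x l) ∧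
  ∀ y l y' l', y.length = x.length → y'.length = x.length →
    M.RunFrom M.start y l → M.RunFrom M.start y' l' → y = y' ∧ l = l'

/-- The nondeterministic automatic complexity of a word `x`: the least number of states
of an NFA accepting `x` uniquely among words of its length, along a unique path. -/
noncomputable def AN {σ : Type} (x : List σ) : ℕ :=
  sInf {m | ∃ M : NFAc σ m, M.UniquelyAccepts x}

/-- The cycle automaton on `z`, accepting at position `L % z.length`. -/
def cycleNFA {σ : Type} (z : List σ) (hz : z ≠ []) (L : ℕ) : NFAc σ z.length where
  start := ⟨0, List.length_pos_iff.mpr hz⟩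
  accept p := p.val = L % z.length
  step p a q := a = z.get ⟨p.val, p.isLt⟩ ∧ q.val = (p.val + 1) % z.length

lemma cycle_unique {σ : Type} (z : List σ) (hz : z ≠ []) (L : ℕ) :
    ∀ (y y' : List σ) (l l' : List (Fin z.length)) (p : Fin z.length),
      y.length = y'.length →
      (cycleNFA z hz L).RunFrom p y l → (cycleNFA z hz L).RunFrom p y' l' →
      y = y' ∧ l = l' := by
  intro y
  induction y with
  | nil =>
    intro y' l l' p hlen h h'
    have hy' : y' = [] := List.length_eq_zero_iff.mp hlen.symm
    subst hy'
    obtain ⟨hl, _⟩ := h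
    obtain ⟨hl', _⟩ := h'
    exact ⟨rfl, hl.trans hl'.symm⟩
  | cons a t ih =>
    intro y' l l' p hlen h h'
    cases y' with
    | nil => simp at hlen
    | cons a' t' =>
      obtain ⟨q, r, ⟨ha, hq⟩, hrun, hl⟩ := h
      obtain ⟨q', r', ⟨ha', hq'⟩, hrun', hl'⟩ := h'
      have haa : a = a' := ha.trans ha'.symm
      have hqq : q = q' := Fin.ext (hq.trans hq'.symm)
      subst haa; subst hqq
      have hlen' : t.length = t'.length := by simpa using hlen
      obtain ⟨ht, hr⟩ := ih t' r r' q hlen' hrun hrun'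
      subst ht; subst hr
      exact ⟨rfl, hl.trans hl'.symm⟩

lemma cycle_run {σ : Type} (z : List σ) (hz : z ≠ []) (x : List σ)
    (hpow : ∀ i, i < x.length → x[i]? = z[i % z.length]?) :
    ∀ (L k : ℕ), k + L = x.length →
      ∃ l, (cycleNFA z hz x.length).RunFrom
        ⟨k % z.length, Nat.mod_lt _ (List.length_pos_iff.mpr hz)⟩ (x.drop k) l := by
  intro L
  induction L with
  | zero =>
    intro k hk
    have hk' : k = x.length := by omega
    subst hk'
    refine ⟨[⟨x.length % z.length, Nat.mod_lt _ (List.length_pos_iff.mpr hz)⟩], ?_⟩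
    rw [List.drop_length]
    exact ⟨rfl, rfl⟩
  | succ L ih =>
    intro k hk
    have hk' : k < x.length := by omega
    have hdrop : x.drop k = x[k] :: x.drop (k + 1) := List.drop_eq_getElem_cons hk'
    obtain ⟨l, hl⟩ := ih (k + 1) (by omega)
    have hkn : k % z.length < z.length := Nat.mod_lt _ (List.length_pos_iff.mpr hz)
    have hxk : x[k] = z.get ⟨k % z.length, hkn⟩ := by
      have := hpow k hk'
      rw [List.getElem?_eq_getElem hk', List.getElem?_eq_getElem hkn] at this
      simpa using this
    refine ⟨⟨k % z.length, hkn⟩ :: l, ?_⟩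
    rw [hdrop]
    refine ⟨⟨(k + 1) % z.length, Nat.mod_lt _ (List.length_pos_iff.mpr hz)⟩, l, ⟨hxk, ?_⟩, hl, rfl⟩
    simp [Nat.mod_add_mod]

/-- If `x = z^α` for a rational `α ≥ 1` and a nonempty word `z` (i.e. `|x| = α·|z|`
and `x` is a prefix of `zzz⋯`), then `A_N(x) ≤ |x|/α`. -/
theorem AN_le_of_isPower {σ : Type} [Fintype σ] (α : ℚ) (hα : 1 ≤ α)
    (x z : List σ) (hz : z ≠ [])
    (hlen : (x.length : ℚ) = α * (z.length : ℚ))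
    (hpow : ∀ i, i < x.length → x[i]? = z[i % z.length]?) :
    (AN x : ℚ) ≤ (x.length : ℚ) / α := by
  have hn : 0 < z.length := List.length_pos_iff.mpr hz
  have hU : (cycleNFA z hz x.length).UniquelyAccepts x := by
    constructor
    · obtain ⟨l, hl⟩ := cycle_run z hz x hpow x.length 0 (by omega)
      refine ⟨l, ?_⟩
      have : (⟨0 % z.length, Nat.mod_lt _ hn⟩ : Fin z.length) = (cycleNFA z hz x.length).start :=
        Fin.ext (by simp [cycleNFA])
      rw [← this]
      simpa using hl
    · intro y l y' l' hy hy' h h'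
      exact cycle_unique z hz x.length y y' l l' _ (hy.trans hy'.symm) h h'
  have hAN : AN x ≤ z.length := Nat.sInf_le ⟨_, hU⟩
  have hα0 : (0 : ℚ) < α := lt_of_lt_of_le zero_lt_one hα
  rw [hlen, mul_div_cancel_left₀ _ (ne_of_gt hα0)]
  exact_mod_cast hAN
end

section
/- Let Σ be a finite alphabet, let k ≥ 1 be an integer, and let x ∈ Σ*. If A_N(x) ≤ |x|/k, then x contains a k-th power, i.e., x has a factor (consecutive subword) of the form z^k for some nonempty word z. -/
namespace KPow
variable {σ : Type}

def pw (z : List σ) (n : ℕ) : List σ := (List.replicate n z).flatten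

@[simp] lemma pw_zero (z : List σ) : pw z 0 = [] := rfl
@[simp] lemma pw_succ (z : List σ) (n : ℕ) : pw z (n+1) = z ++ pw z n := by
  simp [pw, List.replicate_succ]

lemma pw_one (z : List σ) : pw z 1 = z := by simp

lemma pw_add (z : List σ) (m n : ℕ) : pw z (m + n) = pw z m ++ pw z n := by
  induction m with
  | zero => simp
  | succ m ih => rw [Nat.succ_add]; simp [ih]

lemma pw_length (z : List σ) (n : ℕ) : (pw z n).length = n * z.length := by
  induction n with
  | zero => simp
  | succ n ih => simp [ih, Nat.succ_mul, Nat.add_comm]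

lemma pw_pw (z : List σ) (m n : ℕ) : pw (pw z m) n = pw z (n * m) := by
  induction n with
  | zero => simp
  | succ n ih => rw [pw_succ, ih, Nat.succ_mul, Nat.add_comm, pw_add]

lemma pw_comm (z : List σ) (n : ℕ) : z ++ pw z n = pw z n ++ z := by
  induction n with
  | zero => simp
  | succ n ih => rw [pw_succ, List.append_assoc, ih, ← List.append_assoc]

lemma pw_ne_nil {z : List σ} {n : ℕ} (h : pw z n ≠ []) : z ≠ [] ∧ 1 ≤ n := by
  constructor
  · rintro rfl; exact h (by simp [pw])
  · rcases n with _ | n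
    · exact absurd rfl h
    · omega

-- Lemma A (aux): commuting words have a common root
lemma commA_aux : ∀ N (a b : List σ), a.length + b.length ≤ N → a.length ≤ b.length →
    a ++ b = b ++ a → ∃ t i j, a = pw t i ∧ b = pw t j := by
  intro N
  induction N with
  | zero =>
    intro a b hN _ _
    have ha : a = [] := by
      cases a <;> simp_all
    have hb : b = [] := by
      cases b <;> simp_all
    exact ⟨[], 0, 0, by simp [ha], by simp [hb]⟩
  | succ N ih =>
    intro a b hN hab hcomm
    rcases eq_or_ne a [] with rfl | hane
    · exact ⟨b, 0, 1, by simp, by simp [pw_one]⟩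
    · -- a is a prefix of b
      have h1 : a <+: b ++ a := hcomm ▸ List.prefix_append a b
      have h2 : a <+: b := List.prefix_of_prefix_length_le h1 (List.prefix_append b a) hab
      obtain ⟨c, rfl⟩ := h2
      have hcomm' : a ++ c = c ++ a := by
        have h3 : a ++ (a ++ c) = a ++ (c ++ a) := by
          simpa [List.append_assoc] using hcomm
        exact List.append_cancel_left h3
      have halen : 1 ≤ a.length := List.length_pos_iff.mpr hane
      have hsum : a.length + c.length ≤ N := by
        have := hN; simp at this ⊢; omega
      rcases le_total a.length c.length with hle | hle
      · obtain ⟨t, i, j, rfl, hc⟩ := ih a c hsum hle hcomm'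
        exact ⟨t, i, i + j, rfl, by rw [pw_add, hc]⟩
      · obtain ⟨t, i, j, hc, rfl⟩ := ih c a (by omega) hle hcomm'.symm
        exact ⟨t, j, j + i, rfl, by rw [pw_add, hc]⟩

lemma commA {a b : List σ} (hcomm : a ++ b = b ++ a) :
    ∃ t i j, a = pw t i ∧ b = pw t j := by
  rcases le_total a.length b.length with hle | hle
  · exact commA_aux (a.length + b.length) a b le_rfl hle hcomm
  · obtain ⟨t, i, j, hb, ha⟩ := commA_aux (b.length + a.length) b a le_rfl hle hcomm.symm
    exact ⟨t, j, i, ha, hb⟩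

lemma comm_pw {x w : List σ} (h : x ++ w = w ++ x) (N : ℕ) :
    x ++ pw w N = pw w N ++ x := by
  induction N with
  | zero => simp
  | succ N ih =>
    rw [pw_succ, ← List.append_assoc, h, List.append_assoc, ih, List.append_assoc]

-- Lemma G (centralizer): aux with wlog
lemma commG_aux : ∀ N (w x y : List σ), x.length + y.length ≤ N → x.length ≤ y.length →
    w ≠ [] → x ++ w = w ++ x → y ++ w = w ++ y → x ++ y = y ++ x := by
  intro N
  induction N with
  | zero =>
    intro w x y hN _ _ _ _
    have hx : x = [] := by cases x <;> simp_all
    have hy : y = [] := by cases y <;> simp_all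
    simp [hx, hy]
  | succ N ih =>
    intro w x y hN hxy hw hxw hyw
    rcases eq_or_ne x [] with rfl | hxne
    · simp
    · have hwlen : 1 ≤ w.length := List.length_pos_iff.mpr hw
      set W := pw w y.length with hW
      have hWlen : y.length ≤ W.length := by
        rw [hW, pw_length]; nlinarith
      have hxW : x ++ W = W ++ x := comm_pw hxw _
      have hyW : y ++ W = W ++ y := comm_pw hyw _
      have hxpre : x <+: W := by
        have h1 : x <+: W ++ x := hxW ▸ List.prefix_append x W
        exact List.prefix_of_prefix_length_le h1 (List.prefix_append W x) (le_trans hxy hWlen)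
      have hypre : y <+: W := by
        have h1 : y <+: W ++ y := hyW ▸ List.prefix_append y W
        exact List.prefix_of_prefix_length_le h1 (List.prefix_append W y) hWlen
      have hxy' : x <+: y := List.prefix_of_prefix_length_le hxpre hypre hxy
      obtain ⟨z, rfl⟩ := hxy'
      have hzw : z ++ w = w ++ z := by
        have : x ++ (z ++ w) = x ++ (w ++ z) := by
          have := hyw
          rw [List.append_assoc] at this
          rw [this, ← List.append_assoc, ← hxw, List.append_assoc]
        exact List.append_cancel_left this
      have hxlen : 1 ≤ x.length := List.length_pos_iff.mpr hxne
      have hsum : x.length + z.length ≤ N := by simp at hN ⊢; omega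
      have hxz : x ++ z = z ++ x := by
        rcases le_total x.length z.length with hle | hle
        · exact ih w x z hsum hle hw hxw hzw
        · exact (ih w z x (by omega) hle hw hzw hxw).symm
      calc x ++ (x ++ z) = x ++ (z ++ x) := by rw [hxz]
        _ = (x ++ z) ++ x := by rw [List.append_assoc]

lemma commG {w x y : List σ} (hw : w ≠ []) (hxw : x ++ w = w ++ x) (hyw : y ++ w = w ++ y) :
    x ++ y = y ++ x := by
  rcases le_total x.length y.length with hle | hle
  · exact commG_aux (x.length + y.length) w x y le_rfl hle hw hxw hyw
  · exact (commG_aux (y.length + x.length) w y x le_rfl hle hw hyw hxw).symm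

-- Lemma H: pairwise commuting nonempty words have a common root
lemma commH : ∀ N (zs : List (List σ)), (zs.map List.length).sum ≤ N → zs ≠ [] →
    (∀ z ∈ zs, z ≠ []) → (∀ a ∈ zs, ∀ b ∈ zs, a ++ b = b ++ a) →
    ∃ r, r ≠ [] ∧ ∀ z ∈ zs, ∃ e, z = pw r e := by
  intro N
  induction N with
  | zero =>
    intro zs _ hne hnil _
    exfalso
    rcases zs with _ | ⟨z, zs⟩
    · exact hne rfl
    · have := hnil z (by simp)
      cases z <;> simp_all
  | succ N ih =>
    intro zs hN hne hnil hcomm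
    rcases zs with _ | ⟨z₁, zs⟩
    · exact absurd rfl hne
    rcases zs with _ | ⟨z₂, rest⟩
    · exact ⟨z₁, hnil z₁ (by simp), by intro z hz; simp at hz; exact ⟨1, by rw [pw_one, hz]⟩⟩
    · -- z₁ and z₂ commute; get common root t
      have h12 : z₁ ++ z₂ = z₂ ++ z₁ := hcomm z₁ (by simp) z₂ (by simp)
      obtain ⟨t, i, j, h1, h2⟩ := commA h12
      have h1ne : z₁ ≠ [] := hnil z₁ (by simp)
      have h2ne : z₂ ≠ [] := hnil z₂ (by simp)
      have htne : t ≠ [] := by rintro rfl; exact h1ne (by simpa [pw, List.flatten_replicate_nil] using h1)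
      have hi1 : 1 ≤ i := (pw_ne_nil (h1 ▸ h1ne)).2
      have hj1 : 1 ≤ j := (pw_ne_nil (h2 ▸ h2ne)).2
      have htz1 : t ++ z₁ = z₁ ++ t := by rw [h1]; exact (pw_comm t i).symm ▸ (pw_comm t i)
      -- new list t :: rest
      have hcomm' : ∀ a ∈ t :: rest, ∀ b ∈ t :: rest, a ++ b = b ++ a := by
        intro a ha b hb
        have key : ∀ c ∈ t :: rest, c ++ z₁ = z₁ ++ c := by
          intro c hc
          rcases List.mem_cons.mp hc with rfl | hc
          · rw [h1, pw_comm]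
          · exact hcomm c (by simp [hc]) z₁ (by simp)
        exact commG h1ne (key a ha) (key b hb)
      have hlensum : ((t :: rest).map List.length).sum ≤ N := by
        have htl : t.length ≤ z₁.length := by
          rw [h1, pw_length]; nlinarith [List.length_pos_iff.mpr htne]
        have h2l : 1 ≤ z₂.length := List.length_pos_iff.mpr h2ne
        simp at hN ⊢; omega
      obtain ⟨r, hrne, hpow⟩ := ih (t :: rest) hlensum (by simp)
        (by intro z hz; rcases List.mem_cons.mp hz with rfl | hz
            · exact htne
            · exact hnil z (by simp [hz])) hcomm'
      obtain ⟨α, hα⟩ := hpow t (by simp)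
      refine ⟨r, hrne, ?_⟩
      intro z hz
      rcases List.mem_cons.mp hz with rfl | hz
      · exact ⟨i * α, by rw [h1, hα, pw_pw]⟩
      rcases List.mem_cons.mp hz with rfl | hz
      · exact ⟨j * α, by rw [h2, hα, pw_pw]⟩
      · exact hpow z (by simp [hz])

lemma flatten_pw {r : List σ} (hr : r ≠ []) : ∀ (zs : List (List σ)),
    (∀ z ∈ zs, z ≠ []) → (∀ z ∈ zs, ∃ e, z = pw r e) →
    ∃ E, zs.flatten = pw r E ∧ zs.length ≤ E := by
  intro zs
  induction zs with
  | nil => exact fun _ _ => ⟨0, by simp, by simp⟩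
  | cons z zs ih =>
    intro hnil hpow
    obtain ⟨E, hE, hlen⟩ := ih (fun z hz => hnil z (by simp [hz])) (fun z hz => hpow z (by simp [hz]))
    obtain ⟨e, he⟩ := hpow z (by simp)
    have he1 : 1 ≤ e := (pw_ne_nil (he ▸ hnil z (by simp))).2
    exact ⟨e + E, by rw [List.flatten_cons, hE, he, pw_add], by simp; omega⟩


variable {σ : Type} {m : ℕ}

def PathTo (M : NFAc σ m) : Fin m → List σ → Fin m → Prop
  | p, [], q => q = p
  | p, a :: y, q => ∃ r, M.step p a r ∧ PathTo M r y q

def PathL (M : NFAc σ m) : Fin m → List σ → List (Fin m) → Fin m → Prop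
  | p, [], l, q => l = [p] ∧ q = p
  | p, a :: y, l, q => ∃ r l', M.step p a r ∧ PathL M r y l' q ∧ l = p :: l'

lemma run_iff (M : NFAc σ m) : ∀ (y : List σ) (p : Fin m) (l : List (Fin m)),
    M.RunFrom p y l ↔ ∃ q, PathL M p y l q ∧ M.accept q := by
  intro y
  induction y with
  | nil =>
    intro p l
    constructor
    · rintro ⟨rfl, h⟩; exact ⟨p, ⟨rfl, rfl⟩, h⟩
    · rintro ⟨q, ⟨rfl, rfl⟩, h⟩; exact ⟨rfl, h⟩
  | cons a y ih =>
    intro p l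
    constructor
    · rintro ⟨q, l', hs, hr, rfl⟩
      obtain ⟨f, hp, ha⟩ := (ih q l').mp hr
      exact ⟨f, ⟨q, l', hs, hp, rfl⟩, ha⟩
    · rintro ⟨f, ⟨q, l', hs, hp, rfl⟩, ha⟩
      exact ⟨q, l', hs, (ih q l').mpr ⟨f, hp, ha⟩, rfl⟩

lemma pathL_pathTo {M : NFAc σ m} : ∀ {y : List σ} {p l q}, PathL M p y l q → PathTo M p y q := by
  intro y
  induction y with
  | nil => rintro p l q ⟨rfl, rfl⟩; rfl
  | cons a y ih =>
    rintro p l q ⟨r, l', hs, hp, rfl⟩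
    exact ⟨r, hs, ih hp⟩

lemma pathTo_pathL {M : NFAc σ m} : ∀ {y : List σ} {p q}, PathTo M p y q → ∃ l, PathL M p y l q := by
  intro y
  induction y with
  | nil => rintro p q h; exact ⟨[p], rfl, h⟩
  | cons a y ih =>
    rintro p q ⟨r, hs, hp⟩
    obtain ⟨l, hl⟩ := ih hp
    exact ⟨p :: l, r, l, hs, hl, rfl⟩

lemma pathTo_append {M : NFAc σ m} : ∀ {y₁ : List σ} {p r}, PathTo M p y₁ r →
    ∀ {y₂ q}, PathTo M r y₂ q → PathTo M p (y₁ ++ y₂) q := by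
  intro y₁
  induction y₁ with
  | nil => rintro p r rfl y₂ q h; exact h
  | cons a y ih =>
    rintro p r ⟨s, hs, hp⟩ y₂ q h
    exact ⟨s, hs, ih hp h⟩

lemma pathTo_run {M : NFAc σ m} {y : List σ} {p q} (h : PathTo M p y q) (ha : M.accept q) :
    ∃ l, M.RunFrom p y l := by
  obtain ⟨l, hl⟩ := pathTo_pathL h
  exact ⟨l, (run_iff M y p l).mpr ⟨q, hl, ha⟩⟩

lemma pathL_length {M : NFAc σ m} : ∀ {y : List σ} {p l q}, PathL M p y l q →
    l.length = y.length + 1 := by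
  intro y
  induction y with
  | nil => rintro p l q ⟨rfl, rfl⟩; rfl
  | cons a y ih =>
    rintro p l q ⟨r, l', hs, hp, rfl⟩
    simp [ih hp]

lemma pathTo_flatten {M : NFAc σ m} {p : Fin m} : ∀ (W : List (List σ)),
    (∀ z ∈ W, PathTo M p z p) → PathTo M p W.flatten p := by
  intro W
  induction W with
  | nil => exact fun _ => rfl
  | cons z W ih =>
    intro h
    rw [List.flatten_cons]
    exact pathTo_append (h z (by simp)) (ih (fun z hz => h z (by simp [hz])))

/-- Extraction of `n` loops at a state `r` visited at least `n+1` times. -/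
lemma extract {M : NFAc σ m} {r : Fin m} : ∀ (y : List σ) (n : ℕ) (p : Fin m)
    (l : List (Fin m)) (q : Fin m), PathL M p y l q → n + 1 ≤ List.count r l →
    ∃ (u : List σ) (zs : List (List σ)) (v : List σ),
      y = u ++ zs.flatten ++ v ∧ zs.length = n ∧
      (∀ z ∈ zs, z ≠ [] ∧ PathTo M r z r) ∧ PathTo M p u r ∧ PathTo M r v q := by
  intro y
  induction y with
  | nil =>
    intro n p l q hpl hc
    obtain ⟨rfl, hq⟩ := hpl
    have hcr : List.count r [p] = if p = r then 1 else 0 := by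
      simp [List.count_cons, beq_iff_eq]
    by_cases hpr : p = r
    · have hn : n = 0 := by rw [hcr, if_pos hpr] at hc; omega
      subst hn
      refine ⟨[], [], [], by simp, rfl, by simp, hpr.symm, ?_⟩
      show q = r
      rw [hq]; exact hpr
    · exfalso; rw [hcr, if_neg hpr] at hc; omega
  | cons a y ih =>
    intro n p l q hpl hc
    obtain ⟨s, l', hs, hp, rfl⟩ := hpl
    have hcount : List.count r (p :: l') = List.count r l' + if p = r then 1 else 0 := by
      simp [List.count_cons, beq_iff_eq]
    by_cases hpr : p = r
    · rcases n with _ | n'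
      · refine ⟨[], [], a :: y, by simp, rfl, by simp, hpr.symm, ?_⟩
        have hthis : PathTo M p (a :: y) q := ⟨s, hs, pathL_pathTo hp⟩
        rwa [hpr] at hthis
      · have hc' : n' + 1 ≤ List.count r l' := by rw [hcount, if_pos hpr] at hc; omega
        obtain ⟨u', zs', v', hy, hlen, hloop, hu', hv'⟩ := ih n' s l' q hp hc'
        refine ⟨[], (a :: u') :: zs', v', ?_, by simp [hlen], ?_, hpr.symm, hv'⟩
        · simp [hy, List.flatten_cons, List.append_assoc]
        · intro z hz
          rcases List.mem_cons.mp hz with rfl | hz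
          · refine ⟨by simp, ?_⟩
            show PathTo M r (a :: u') r
            exact ⟨s, hpr ▸ hs, hu'⟩
          · exact hloop z hz
    · have hc' : n + 1 ≤ List.count r l' := by rw [hcount, if_neg hpr] at hc; omega
      obtain ⟨u', zs', v', hy, hlen, hloop, hu', hv'⟩ := ih n s l' q hp hc'
      exact ⟨a :: u', zs', v', by simp [hy], hlen, hloop, ⟨s, hs, hu'⟩, hv'⟩

/-- Pigeonhole: a list over `Fin m` of length `> m * k` has an element with count `≥ k + 1`. -/
lemma pigeon {k : ℕ} (l : List (Fin m)) (h : m * k < l.length) : ∃ p, k + 1 ≤ l.count p := by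
  by_contra hcon
  push_neg at hcon
  have hle : ∀ p, l.count p ≤ k := fun p => by have := hcon p; omega
  have h1 : l.length = ∑ p ∈ (l : Multiset (Fin m)).toFinset, l.count p := by
    have := Multiset.toFinset_sum_count_eq (l : Multiset (Fin m))
    simpa using this.symm
  have h2 : ∑ p ∈ (l : Multiset (Fin m)).toFinset, l.count p ≤
      ∑ _p ∈ (l : Multiset (Fin m)).toFinset, k :=
    Finset.sum_le_sum (fun p _ => hle p)
  have h3 : ∑ _p ∈ (l : Multiset (Fin m)).toFinset, k = (l : Multiset (Fin m)).toFinset.card * k := by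
    simp [Finset.sum_const, Nat.smul_one_eq_cast, mul_comm]
  have h4 : (l : Multiset (Fin m)).toFinset.card ≤ m := by
    have := Finset.card_le_card (Finset.subset_univ (l : Multiset (Fin m)).toFinset)
    simpa using this
  have : l.length ≤ m * k := by
    calc l.length ≤ (l : Multiset (Fin m)).toFinset.card * k := by omega
      _ ≤ m * k := Nat.mul_le_mul_right k h4
  omega

variable {σ : Type}

def pathNFA (x : List σ) : NFAc σ (x.length + 1) where
  start := ⟨0, Nat.succ_pos _⟩
  accept p := (p : ℕ) = x.length
  step p a q := (q : ℕ) = (p : ℕ) + 1 ∧ x[(p : ℕ)]? = some a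

lemma pathNFA_exists (x : List σ) : ∀ (y : List σ) (i : ℕ) (hi : i + y.length = x.length),
    y = x.drop i → ∃ l, (pathNFA x).RunFrom ⟨i, by omega⟩ y l := by
  intro y
  induction y with
  | nil =>
    intro i hi hy
    refine ⟨[⟨i, by omega⟩], rfl, ?_⟩
    show i = x.length
    simpa using hi
  | cons a y ih =>
    intro i hi hy
    have hget : x[i]? = some a := by
      have h0 : (x.drop i)[0]? = some a := by rw [← hy]; simp
      rw [List.getElem?_drop] at h0
      simpa using h0
    have hdrop : y = x.drop (i + 1) := by
      have : (x.drop i).drop 1 = x.drop (i + 1) := by rw [List.drop_drop]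
      rw [← this, ← hy]
      rfl
    have hi' : (i + 1) + y.length = x.length := by simp at hi ⊢; omega
    obtain ⟨l, hl⟩ := ih (i + 1) hi' hdrop
    exact ⟨⟨i, by omega⟩ :: l, ⟨i + 1, by omega⟩, l, ⟨rfl, hget⟩, hl, rfl⟩

lemma pathNFA_unique (x : List σ) : ∀ (y y' : List σ) (p : Fin (x.length + 1)) l l',
    y.length = y'.length → (pathNFA x).RunFrom p y l → (pathNFA x).RunFrom p y' l' →
    y = y' ∧ l = l' := by
  intro y
  induction y with
  | nil =>
    rintro y' p l l' hlen ⟨rfl, _⟩ hr'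
    rcases y' with _ | ⟨a', y'⟩
    · obtain ⟨rfl, _⟩ := hr'
      exact ⟨rfl, rfl⟩
    · simp at hlen
  | cons a y ih =>
    rintro y' p l l' hlen ⟨q, lq, ⟨hq1, hq2⟩, hr, rfl⟩ hr'
    rcases y' with _ | ⟨a', y''⟩
    · simp at hlen
    obtain ⟨q', lq', ⟨hq1', hq2'⟩, hr', rfl⟩ := hr'
    have haa : a = a' := by rw [hq2] at hq2'; exact Option.some.inj hq2'
    have hqq : q = q' := Fin.ext (by rw [hq1, hq1'])
    subst haa; subst hqq
    obtain ⟨h1, h2⟩ := ih y'' q lq lq' (by simpa using hlen) hr hr'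
    exact ⟨by rw [h1], by rw [h2]⟩

lemma AN_mem (x : List σ) : ∃ M : NFAc σ (AN x), M.UniquelyAccepts x := by
  have hne : {m | ∃ M : NFAc σ m, M.UniquelyAccepts x}.Nonempty := by
    refine ⟨x.length + 1, pathNFA x, ?_, ?_⟩
    · exact pathNFA_exists x x 0 (by simp) (by simp)
    · intro y l y' l' hy hy' hr hr'
      exact pathNFA_unique x y y' (pathNFA x).start l l' (hy.trans hy'.symm) hr hr'
  exact Nat.sInf_mem hne

end KPow

/-- If `k ≥ 1` and `A_N(x) ≤ |x|/k`, then `x` contains a `k`-th power: some factor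
of `x` equals `z^k` for a nonempty word `z`. -/
theorem contains_kth_power_of_AN_le {σ : Type} [Fintype σ] (k : ℕ) (hk : 1 ≤ k)
    (x : List σ) (h : (AN x : ℚ) ≤ (x.length : ℚ) / (k : ℚ)) :
    ∃ u z v : List σ, z ≠ [] ∧ x = u ++ (List.replicate k z).flatten ++ v := by
  classical
  obtain ⟨M, hM⟩ := KPow.AN_mem x
  have hkQ : (0 : ℚ) < (k : ℚ) := by exact_mod_cast hk
  have hmul : (AN x : ℚ) * (k : ℚ) ≤ (x.length : ℚ) := (le_div_iff₀ hkQ).mp h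
  have hmk : AN x * k ≤ x.length := by exact_mod_cast hmul
  obtain ⟨⟨l, hrun⟩, huniq⟩ := hM
  obtain ⟨f, hpl, hacc⟩ := (KPow.run_iff M x M.start l).mp hrun
  have hlen : l.length = x.length + 1 := KPow.pathL_length hpl
  have hlt : AN x * k < l.length := by omega
  obtain ⟨p, hp⟩ := KPow.pigeon l hlt
  obtain ⟨u, zs, v, hx, hzslen, hloops, hu, hv⟩ :=
    KPow.extract (r := p) x k M.start l f hpl hp
  have runW : ∀ W : List (List σ), W.Perm zs →
      ∃ l', M.RunFrom M.start (u ++ W.flatten ++ v) l' := by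
    intro W hW
    have hWloop : ∀ z ∈ W, KPow.PathTo M p z p := fun z hz => (hloops z (hW.mem_iff.mp hz)).2
    have h1 : KPow.PathTo M M.start (u ++ W.flatten) p :=
      KPow.pathTo_append hu (KPow.pathTo_flatten W hWloop)
    have h2 : KPow.PathTo M M.start ((u ++ W.flatten) ++ v) f := KPow.pathTo_append h1 hv
    exact KPow.pathTo_run h2 hacc
  have lenW : ∀ W : List (List σ), W.Perm zs → (u ++ W.flatten ++ v).length = x.length := by
    intro W hW
    have hfl : W.flatten.length = zs.flatten.length := by
      rw [List.length_flatten, List.length_flatten]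
      exact (hW.map List.length).sum_eq
    simp [hx, hfl]
  have eqW : ∀ W₁ W₂ : List (List σ), W₁.Perm zs → W₂.Perm zs →
      u ++ W₁.flatten ++ v = u ++ W₂.flatten ++ v := by
    intro W₁ W₂ h₁ h₂
    obtain ⟨l₁, hl₁⟩ := runW W₁ h₁
    obtain ⟨l₂, hl₂⟩ := runW W₂ h₂
    exact (huniq _ l₁ _ l₂ (lenW W₁ h₁) (lenW W₂ h₂) hl₁ hl₂).1
  have hcomm : ∀ a ∈ zs, ∀ b ∈ zs, a ++ b = b ++ a := by
    intro a ha b hb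
    by_cases hab : a = b
    · rw [hab]
    · have h1 := List.perm_cons_erase ha
      rcases List.mem_cons.mp (h1.mem_iff.mp hb) with h' | hb'
      · exact absurd h'.symm hab
      have h2 := List.perm_cons_erase hb'
      have hP1 := (h1.trans (h2.cons a)).symm
      have hP2 := (List.Perm.swap a b _).trans hP1
      have heq := eqW _ _ hP1 hP2
      simp only [List.flatten_cons, List.append_assoc] at heq
      have heq3 := List.append_cancel_left heq
      rw [← List.append_assoc a b, ← List.append_assoc b a] at heq3
      exact (List.append_inj heq3 (by simp [Nat.add_comm])).1
  have hzs_ne : zs ≠ [] := by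
    intro hnil
    rw [hnil] at hzslen
    simp at hzslen
    omega
  obtain ⟨r, hrne, hpow⟩ := KPow.commH ((zs.map List.length).sum) zs le_rfl hzs_ne
    (fun z hz => (hloops z hz).1) hcomm
  obtain ⟨E, hE, hEk⟩ := KPow.flatten_pw hrne zs (fun z hz => (hloops z hz).1) hpow
  have hkE : k ≤ E := hzslen ▸ hEk
  refine ⟨u, r, KPow.pw r (E - k) ++ v, hrne, ?_⟩
  rw [hx, hE]
  show u ++ KPow.pw r E ++ v = u ++ KPow.pw r k ++ (KPow.pw r (E - k) ++ v)
  rw [show E = k + (E - k) by omega, KPow.pw_add]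
  simp [List.append_assoc]
end

section
/- Let α = 17/8. There exists a word x over a 5-letter alphabet, namely x = (123)²0(12341)² = 12312301234112341 of length 17 over {0,1,2,3,4}, such that A_N(x) ≤ |x|/α = 8, yet x contains no factor which is an α-power z^{17/8} of any word z. Hence the implication 'A_N(x) ≤ |x|/α ⟹ x contains an α-power' fails for α = 17/8. -/
def wordW : List (Fin 5) := [1,2,3,1,2,3,0,1,2,3,4,1,1,2,3,4,1]

def trans8 : List (Fin 8 × Fin 5 × Fin 8) :=
  [(0,1,1),(1,2,2),(2,3,0),(0,0,3),(3,1,4),(4,2,5),(5,3,6),(6,4,7),(7,1,3)]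

def M8 : NFAc (Fin 5) 8 where
  start := 0
  accept := fun q => q = 3
  step := fun p a q => (p, a, q) ∈ trans8

def runs8 : Fin 8 → ℕ → List (List (Fin 5) × List (Fin 8))
  | s, 0 => if s = 3 then [([], [s])] else []
  | s, n+1 => (trans8.filter (fun t => t.1 = s)).flatMap (fun t =>
      (runs8 t.2.2 n).map (fun yl => (t.2.1 :: yl.1, s :: yl.2)))

lemma runs8_correct : ∀ (n : ℕ) (s : Fin 8) (y : List (Fin 5)) (l : List (Fin 8)),
    y.length = n → (M8.RunFrom s y l ↔ (y, l) ∈ runs8 s n) := by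
  intro n
  induction n with
  | zero =>
    intro s y l hy
    rw [List.length_eq_zero_iff] at hy
    subst hy
    simp only [NFAc.RunFrom, runs8, M8]
    by_cases h : s = 3 <;> simp [h]
  | succ n ih =>
    intro s y l hy
    cases y with
    | nil => simp at hy
    | cons a y' =>
      simp only [List.length_cons, Nat.succ.injEq] at hy
      simp only [NFAc.RunFrom, runs8, List.mem_flatMap, List.mem_map, List.mem_filter]
      constructor
      · rintro ⟨q, l', hstep, hrun, rfl⟩
        exact ⟨(s, a, q), ⟨hstep, decide_eq_true rfl⟩, (y', l'),
          (ih q y' l' hy).mp hrun, rfl⟩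
      · rintro ⟨⟨p, b, q⟩, ⟨hmem, hps⟩, ⟨y2, l2⟩, hrun, heq⟩
        have hps' : p = s := of_decide_eq_true hps
        subst hps'
        rw [Prod.mk.injEq] at heq
        obtain ⟨he1, he2⟩ := heq
        injection he1 with hba hy2
        subst hba
        exact ⟨q, l2, hmem, (ih q y' l2 hy).mpr (hy2 ▸ hrun), he2.symm⟩

def path8 : List (Fin 8) := [0,1,2,0,1,2,0,3,4,5,6,7,3,4,5,6,7,3]

lemma runs8_val : runs8 0 17 = [(wordW, path8)] := by decide

/-- The implication `A_N(x) ≤ |x|/α ⟹ x contains an α-power` fails for `α = 17/8`: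
the word `x = 12312301234112341` of length 17 satisfies `A_N(x) ≤ 8 = |x|/α`, yet no
factor of `x` is an `α`-power `z^(17/8)` of a nonempty word `z`. -/
theorem AN_power_implication_fails :
    AN wordW ≤ 8 ∧
    ¬ ∃ (u w v z : List (Fin 5)), wordW = u ++ w ++ v ∧ z ≠ [] ∧
        (w.length : ℚ) = (17 / 8 : ℚ) * (z.length : ℚ) ∧
        ∀ i, i < w.length → w[i]? = z[i % z.length]? := by
  constructor
  · apply Nat.sInf_le
    refine ⟨M8, ⟨path8, ?_⟩, ?_⟩
    · have : (wordW, path8) ∈ runs8 0 17 := by rw [runs8_val]; simp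
      exact (runs8_correct 17 0 wordW path8 (by decide)).mpr this
    · intro y l y' l' hy hy' hr hr'
      have h1 := (runs8_correct 17 0 y l (by simpa [wordW] using hy)).mp hr
      have h2 := (runs8_correct 17 0 y' l' (by simpa [wordW] using hy')).mp hr'
      rw [runs8_val, List.mem_singleton] at h1 h2
      have e1 := Prod.mk.injEq .. ▸ h1
      have e2 := Prod.mk.injEq .. ▸ h2
      cases h1; cases h2
      exact ⟨rfl, rfl⟩
  · rintro ⟨u, w, v, z, h1, h2, h3, h4⟩
    have hz : 1 ≤ z.length := List.length_pos_iff.mpr h2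
    have h8 : 8 * w.length = 17 * z.length := by
      have : (8 : ℚ) * w.length = 17 * z.length := by
        rw [h3]; ring
      exact_mod_cast this
    have hlen : u.length + (w.length + v.length) = 17 := by
      have := congrArg List.length h1
      simpa [wordW] using this.symm
    have hw17 : w.length ≤ 17 := by omega
    have hw : w.length = 17 := by
      have hd : 17 ∣ w.length := by
        have : (17 : ℕ) ∣ 8 * w.length := ⟨z.length, h8⟩
        exact (Nat.Coprime.dvd_of_dvd_mul_left (by norm_num) this)
      interval_cases h : w.length <;> omega
    have hz8 : z.length = 8 := by omega
    have hu : u = [] := List.eq_nil_of_length_eq_zero (by omega)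
    have hv : v = [] := List.eq_nil_of_length_eq_zero (by omega)
    subst hu hv
    simp only [List.nil_append, List.append_nil] at h1
    subst h1
    have e0 := h4 0 (by omega)
    have e8 := h4 8 (by omega)
    rw [hz8] at e0 e8
    simp [wordW] at e0 e8
    exact absurd (e0.trans e8.symm) (by decide)
end

section
/- Let w = (123)²0(12341)² = 12312301234112341, a word of length 17 over the alphabet {0,1,2,3,4}. Then A_N(w) = 8. -/
theorem List.drop_take_sub_append_drop {α : Type*} (x : List α) {i j : ℕ} (hij : i ≤ j) :
    (x.drop i).take (j - i) ++ x.drop j = x.drop i := by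
  rw [← Nat.add_sub_cancel' hij, ← List.drop_drop, Nat.add_sub_cancel_left,
    List.take_append_drop]

namespace NFAc

variable {σ : Type} {m : ℕ} {M : NFAc σ m}

/-- Unlike in `RunFrom`, the list `l` of visited states omits the final state `q`. -/
def Path (M : NFAc σ m) : Fin m → List σ → List (Fin m) → Fin m → Prop
  | p, [], l, q => l = [] ∧ p = q
  | p, a :: y, l, q => ∃ r l', M.step p a r ∧ M.Path r y l' q ∧ l = p :: l'

theorem Path.append_runFrom {p r : Fin m} {u v : List σ} {lu lv : List (Fin m)}
    (hu : M.Path p u lu r) (hv : M.RunFrom r v lv) : M.RunFrom p (u ++ v) (lu ++ lv) := by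
  induction u generalizing p lu with
  | nil => obtain ⟨rfl, rfl⟩ := hu; exact hv
  | cons a u ih =>
    obtain ⟨s, l', hs, hu, rfl⟩ := hu
    exact ⟨s, l' ++ lv, hs, ih hu, rfl⟩

namespace RunFrom

variable {p : Fin m} {y : List σ} {l : List (Fin m)}

theorem length_eq (h : M.RunFrom p y l) : l.length = y.length + 1 := by
  induction y generalizing p l with
  | nil => rw [h.1]; rfl
  | cons a y ih =>
    obtain ⟨q, l', -, h, rfl⟩ := h
    simp [ih h]

theorem path_take (h : M.RunFrom p y l) {i : ℕ} (hi : i < l.length) :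
    M.Path p (y.take i) (l.take i) l[i] := by
  induction y generalizing p l i with
  | nil =>
    obtain ⟨rfl, -⟩ := h
    obtain rfl : i = 0 := by simpa using hi
    exact ⟨rfl, rfl⟩
  | cons a y ih =>
    obtain ⟨q, l', hs, h, rfl⟩ := h
    cases i with
    | zero => exact ⟨rfl, rfl⟩
    | succ i => exact ⟨q, l'.take i, hs, ih h _, rfl⟩

theorem drop (h : M.RunFrom p y l) {i : ℕ} (hi : i < l.length) :
    M.RunFrom l[i] (y.drop i) (l.drop i) := by
  induction y generalizing p l i with
  | nil =>
    obtain ⟨rfl, hp⟩ := h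
    obtain rfl : i = 0 := by simpa using hi
    exact ⟨rfl, hp⟩
  | cons a y ih =>
    obtain ⟨q, l', hs, h, rfl⟩ := h
    cases i with
    | zero => exact ⟨q, l', hs, h, rfl⟩
    | succ i => exact ih h _

theorem path_drop_take (h : M.RunFrom p y l) {i j : ℕ} (hij : i ≤ j) (hj : j < l.length) :
    M.Path l[i] ((y.drop i).take (j - i)) ((l.drop i).take (j - i)) l[j] := by
  have := (h.drop (hij.trans_lt hj)).path_take (i := j - i) (by rw [List.length_drop]; omega)
  simpa only [List.getElem_drop, Nat.add_sub_cancel' hij] using this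

end RunFrom

def ofTransitions (start : Fin m) (accept : Fin m → Bool) (next : Fin m → List (σ × Fin m)) :
    NFAc σ m where
  start := start
  accept p := accept p
  step p a q := (a, q) ∈ next p

def runsOfLength (accept : Fin m → Bool) (next : Fin m → List (σ × Fin m)) :
    Fin m → ℕ → List (List σ × List (Fin m))
  | p, 0 => if accept p then [([], [p])] else []
  | p, n + 1 => (next p).flatMap fun aq =>
      (runsOfLength accept next aq.2 n).map fun yl => (aq.1 :: yl.1, p :: yl.2)

theorem mem_runsOfLength_iff {start : Fin m} {accept : Fin m → Bool}
    {next : Fin m → List (σ × Fin m)} {p : Fin m} {n : ℕ} {y : List σ} {l : List (Fin m)} :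
    (y, l) ∈ runsOfLength accept next p n ↔
      (ofTransitions start accept next).RunFrom p y l ∧ y.length = n := by
  induction n generalizing p y l with
  | zero =>
    cases y <;> by_cases hp : accept p <;> simp [runsOfLength, RunFrom, ofTransitions, hp]
  | succ n ih =>
    cases y with
    | nil => simp [runsOfLength, RunFrom]
    | cons a y =>
      simp only [runsOfLength, List.mem_flatMap, List.mem_map, ih, ofTransitions, Prod.mk.injEq,
        List.cons.injEq, Prod.exists, ↓existsAndEq, and_true, true_and, exists_and_left, RunFrom,
        List.length_cons, Nat.add_right_cancel_iff]
      constructor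
      · rintro ⟨q, hq, l', ⟨hr, hn⟩, rfl⟩
        exact ⟨⟨q, hq, l', hr, rfl⟩, hn⟩
      · rintro ⟨⟨q, hq, l', hr, rfl⟩, hn⟩
        exact ⟨q, hq, l', ⟨hr, hn⟩, rfl⟩

theorem uniquelyAccepts_of_runsOfLength_eq {start : Fin m} {accept : Fin m → Bool}
    {next : Fin m → List (σ × Fin m)} {x : List σ} {l : List (Fin m)}
    (h : runsOfLength accept next start x.length = [(x, l)]) :
    (ofTransitions start accept next).UniquelyAccepts x := by
  refine ⟨⟨l, (mem_runsOfLength_iff.1 (h ▸ List.mem_singleton_self _)).1⟩, ?_⟩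
  intro y ly y' ly' hy hy' hr hr'
  have hmem := h ▸ mem_runsOfLength_iff.2 ⟨hr, hy⟩
  have hmem' := h ▸ mem_runsOfLength_iff.2 ⟨hr', hy'⟩
  simp only [List.mem_singleton, Prod.mk.injEq] at hmem hmem'
  exact ⟨hmem.1.trans hmem'.1.symm, hmem.2.trans hmem'.2.symm⟩

theorem UniquelyAccepts.append_comm_of_getElem_eq {x : List σ} {l : List (Fin m)}
    (hM : M.UniquelyAccepts x) (hl : M.RunFrom M.start x l) {i j k : ℕ} (hij : i ≤ j)
    (hjk : j ≤ k) (hk : k < l.length) (hi : l[i] = l[j]) (hj : l[j] = l[k]) :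
    (x.drop i).take (j - i) ++ (x.drop j).take (k - j) =
      (x.drop j).take (k - j) ++ (x.drop i).take (j - i) := by
  set u := x.take i
  set v := (x.drop i).take (j - i)
  set w := (x.drop j).take (k - j)
  set z := x.drop k
  have hx : x = u ++ (v ++ (w ++ z)) := by
    rw [List.drop_take_sub_append_drop x hjk, List.drop_take_sub_append_drop x hij,
      List.take_append_drop]
  have hu := hl.path_take (i := i) (by omega)
  have hv := hl.path_drop_take hij (by omega)
  have hw := hl.path_drop_take hjk hk
  have hz := hl.drop hk
  rw [← hj, ← hi] at hw hz
  rw [← hi] at hv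
  have hswap := hu.append_runFrom (hw.append_runFrom (hv.append_runFrom hz))
  have hlen : (u ++ (w ++ (v ++ z))).length = x.length := by
    rw [hx]; simp only [List.length_append]; omega
  have hxswap := (hM.2 _ _ _ _ rfl hlen hl hswap).1
  rw [hx] at hxswap
  exact List.append_cancel_right
    (by simpa only [List.append_assoc] using List.append_cancel_left hxswap)

end NFAc

theorem Finset.exists_lt_lt_of_two_lt_card {α : Type*} [LinearOrder α] {s : Finset α}
    (hs : 2 < s.card) : ∃ a ∈ s, ∃ b ∈ s, ∃ c ∈ s, a < b ∧ b < c := by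
  let e := s.orderEmbOfFin rfl
  exact ⟨e ⟨0, by omega⟩, s.orderEmbOfFin_mem rfl _, e ⟨1, hs.trans' one_lt_two⟩,
    s.orderEmbOfFin_mem rfl _, e ⟨2, hs⟩, s.orderEmbOfFin_mem rfl _,
    e.lt_iff_lt.2 (by simp [Fin.lt_def]), e.lt_iff_lt.2 (by simp [Fin.lt_def])⟩

theorem eq_zero_or_eq_twelve_of_wordW_factors_comm : ∀ i j k : Fin 18, i < j → j < k →
    (wordW.drop i).take (j - i) ++ (wordW.drop j).take (k - j) =
      (wordW.drop j).take (k - j) ++ (wordW.drop i).take (j - i) → i = 0 ∨ j = 12 := by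
  decide

theorem eight_le_of_uniquelyAccepts_wordW {m : ℕ} {M : NFAc (Fin 5) m}
    (hM : M.UniquelyAccepts wordW) : 8 ≤ m := by
  obtain ⟨l, hl⟩ := hM.1
  have hlen : l.length = 18 := hl.length_eq
  by_contra! hm
  let state : Fin 18 → Fin m := fun t => l[t.val]
  let others : Finset (Fin 18) := Finset.univ \ {0, 12}
  have hcard : (Finset.univ : Finset (Fin m)).card * 2 < others.card := by
    rw [Finset.card_univ, Fintype.card_fin, show others.card = 16 from rfl]
    omega
  obtain ⟨p, -, hp⟩ := Finset.exists_lt_card_fiber_of_mul_lt_card_of_maps_to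
    (f := state) (fun t _ => Finset.mem_univ (state t)) hcard
  obtain ⟨i, hi, j, hj, k, hk, hij, hjk⟩ := Finset.exists_lt_lt_of_two_lt_card hp
  simp only [Finset.mem_filter, Finset.mem_sdiff, Finset.mem_insert, Finset.mem_singleton, others]
    at hi hj hk
  have hcomm := hM.append_comm_of_getElem_eq hl hij.le hjk.le (by omega)
    (hi.2.trans hj.2.symm) (hj.2.trans hk.2.symm)
  rcases eq_zero_or_eq_twelve_of_wordW_factors_comm i j k hij hjk hcomm with rfl | rfl
  · exact hi.1.2 (Or.inl rfl)
  · exact hj.1.2 (Or.inr rfl)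

def wordWAutomaton : NFAc (Fin 5) 8 :=
  .ofTransitions 0 (· == 3)
    ![[(1, 1), (0, 3)], [(2, 2)], [(3, 0)], [(1, 4)], [(2, 5)], [(3, 6)], [(4, 7)], [(1, 3)]]

theorem wordWAutomaton_uniquelyAccepts : wordWAutomaton.UniquelyAccepts wordW :=
  NFAc.uniquelyAccepts_of_runsOfLength_eq
    (l := [0, 1, 2, 0, 1, 2, 0, 3, 4, 5, 6, 7, 3, 4, 5, 6, 7, 3]) (by decide)

/-- The nondeterministic automatic complexity of `w = (123)²0(12341)²` is exactly 8. -/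
theorem AN_wordW_eq_eight : AN wordW = 8 := by
  have h8 : 8 ∈ {m | ∃ M : NFAc (Fin 5) m, M.UniquelyAccepts wordW} :=
    ⟨wordWAutomaton, wordWAutomaton_uniquelyAccepts⟩
  exact le_antisymm (Nat.sInf_le h8)
    (le_csInf ⟨8, h8⟩ fun _ ⟨_, hM⟩ => eight_le_of_uniquelyAccepts_wordW hM)
end

section
/- There exists an overlap-free word x of odd length n over a finite alphabet such that A_N(x) < ⌊n/2⌋ + 1 (i.e., x is A_N-simple). -/

def edgesX : List (Fin 7 × Fin 8 × Fin 7) :=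
  [(0,0,1),(1,1,2),(2,2,0),(0,3,3),(3,4,4),(4,5,5),(5,6,6),(6,7,3)]

def stepX (p : Fin 7) (a : Fin 8) (q : Fin 7) : Prop := (p,a,q) ∈ edgesX

instance (p a q) : Decidable (stepX p a q) :=
  inferInstanceAs (Decidable ((p,a,q) ∈ edgesX))

def MX : NFAc (Fin 8) 7 := ⟨0, fun p => p = 3, stepX⟩

def xw : List (Fin 8) := [0,1,2,0,1,2,3,4,5,6,7,4,5,6,7]

lemma s0 : ∀ (a : Fin 8) (q : Fin 7), stepX 0 a q → (a = 0 ∧ q = 1) ∨ (a = 3 ∧ q = 3) := by decide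
lemma s1 : ∀ (a : Fin 8) (q : Fin 7), stepX 1 a q → a = 1 ∧ q = 2 := by decide
lemma s2 : ∀ (a : Fin 8) (q : Fin 7), stepX 2 a q → a = 2 ∧ q = 0 := by decide
lemma s3 : ∀ (a : Fin 8) (q : Fin 7), stepX 3 a q → a = 4 ∧ q = 4 := by decide
lemma s4 : ∀ (a : Fin 8) (q : Fin 7), stepX 4 a q → a = 5 ∧ q = 5 := by decide
lemma s5 : ∀ (a : Fin 8) (q : Fin 7), stepX 5 a q → a = 6 ∧ q = 6 := by decide
lemma s6 : ∀ (a : Fin 8) (q : Fin 7), stepX 6 a q → a = 7 ∧ q = 3 := by decide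

def nxt (p : Fin 7) : Fin 7 := if p = 6 then 3 else ⟨(p.val+1) % 7, Nat.mod_lt _ (by omega)⟩
def lab (p : Fin 7) : Fin 8 := if p = 6 then 7 else ⟨(p.val+1) % 8, Nat.mod_lt _ (by omega)⟩
def offX (p : Fin 7) : ℕ := (p.val + 1) % 4

def cw : Fin 7 → ℕ → List (Fin 8)
  | _, 0 => []
  | p, n+1 => lab p :: cw (nxt p) n

def cl : Fin 7 → ℕ → List (Fin 7)
  | p, 0 => [p]
  | p, n+1 => p :: cl (nxt p) n

lemma cyc : ∀ (y : List (Fin 8)) (p : Fin 7) (l : List (Fin 7)), 3 ≤ p.val →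
    MX.RunFrom p y l →
    y = cw p y.length ∧ l = cl p y.length ∧ (y.length + offX p) % 4 = 0 := by
  intro y
  induction y with
  | nil =>
    intro p l hp h
    obtain ⟨hl, hacc⟩ := h
    have hp3 : p = 3 := hacc
    subst hp3
    exact ⟨rfl, hl, by decide⟩
  | cons a y ih =>
    intro p l hp h
    obtain ⟨q, l', hstep, hrun, rfl⟩ := h
    have hs : stepX p a q := hstep
    fin_cases p <;> simp only [Fin.val] at hp <;> try omega
    · -- p = 3
      obtain ⟨rfl, rfl⟩ := s3 a q hs
      obtain ⟨h1, h2, h3⟩ := ih 4 l' (by decide) hrun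
      refine ⟨?_, ?_, ?_⟩
      · simp [List.length_cons, cw, lab, nxt]; exact h1
      · simp [List.length_cons, cl, nxt]; exact h2
      · simp only [offX, List.length_cons] at h3 ⊢; omega
    · -- p = 4
      obtain ⟨rfl, rfl⟩ := s4 a q hs
      obtain ⟨h1, h2, h3⟩ := ih 5 l' (by decide) hrun
      refine ⟨?_, ?_, ?_⟩
      · simp [List.length_cons, cw, lab, nxt]; exact h1
      · simp [List.length_cons, cl, nxt]; exact h2
      · simp only [offX, List.length_cons] at h3 ⊢; omega
    · -- p = 5
      obtain ⟨rfl, rfl⟩ := s5 a q hs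
      obtain ⟨h1, h2, h3⟩ := ih 6 l' (by decide) hrun
      refine ⟨?_, ?_, ?_⟩
      · simp [List.length_cons, cw, lab, nxt]; exact h1
      · simp [List.length_cons, cl, nxt]; exact h2
      · simp only [offX, List.length_cons] at h3 ⊢; omega
    · -- p = 6
      obtain ⟨rfl, rfl⟩ := s6 a q hs
      obtain ⟨h1, h2, h3⟩ := ih 3 l' (by decide) hrun
      refine ⟨?_, ?_, ?_⟩
      · simp [List.length_cons, cw, lab, nxt]; exact h1
      · simp [List.length_cons, cl, nxt]; exact h2
      · simp only [offX, List.length_cons] at h3 ⊢; omega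

lemma run1 (y : List (Fin 8)) (l) (h : MX.RunFrom 1 y l) :
    ∃ y' l', y = 1 :: y' ∧ l = 1 :: l' ∧ MX.RunFrom 2 y' l' := by
  cases y with
  | nil => exact absurd h.2 (show ¬((1:Fin 7) = 3) by decide)
  | cons a y =>
    obtain ⟨q, l', hs, hr, rfl⟩ := h
    obtain ⟨rfl, rfl⟩ := s1 a q hs
    exact ⟨y, l', rfl, rfl, hr⟩

lemma run2 (y : List (Fin 8)) (l) (h : MX.RunFrom 2 y l) :
    ∃ y' l', y = 2 :: y' ∧ l = 2 :: l' ∧ MX.RunFrom 0 y' l' := by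
  cases y with
  | nil => exact absurd h.2 (show ¬((2:Fin 7) = 3) by decide)
  | cons a y =>
    obtain ⟨q, l', hs, hr, rfl⟩ := h
    obtain ⟨rfl, rfl⟩ := s2 a q hs
    exact ⟨y, l', rfl, rfl, hr⟩

lemma run0 (y : List (Fin 8)) (l) (h : MX.RunFrom 0 y l) :
    (∃ y' l', y = 0 :: 1 :: 2 :: y' ∧ l = 0 :: 1 :: 2 :: l' ∧ MX.RunFrom 0 y' l') ∨
    (∃ y' l', y = 3 :: y' ∧ l = 0 :: l' ∧ MX.RunFrom 3 y' l') := by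
  cases y with
  | nil => exact absurd h.2 (show ¬((0:Fin 7) = 3) by decide)
  | cons a y =>
    obtain ⟨q, l', hs, hr, rfl⟩ := h
    rcases s0 a q hs with ⟨rfl, rfl⟩ | ⟨rfl, rfl⟩
    · obtain ⟨y2, l2, rfl, rfl, hr2⟩ := run1 y l' hr
      obtain ⟨y3, l3, rfl, rfl, hr3⟩ := run2 y2 l2 hr2
      exact Or.inl ⟨y3, l3, rfl, rfl, hr3⟩
    · exact Or.inr ⟨y, l', rfl, rfl, hr⟩

lemma dead : ∀ (y : List (Fin 8)) (l), MX.RunFrom 0 y l →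
    y.length = 0 ∨ y.length = 3 ∨ y.length = 6 → False := by
  have key : ∀ n (y : List (Fin 8)) (l), y.length ≤ n → MX.RunFrom 0 y l →
      y.length = 0 ∨ y.length = 3 ∨ y.length = 6 → False := by
    intro n
    induction n with
    | zero =>
      intro y l hn h hd
      rcases run0 y l h with ⟨y', l', rfl, _, _⟩ | ⟨y', l', rfl, _, _⟩ <;>
        simp only [List.length_cons] at hn <;> omega
    | succ n ih =>
      intro y l hn h hd
      rcases run0 y l h with ⟨y', l', rfl, _, hr⟩ | ⟨y', l', rfl, _, hr⟩
      · refine ih y' l' (by simp only [List.length_cons] at hn; omega) hr ?_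
        simp only [List.length_cons] at hd; omega
      · obtain ⟨_, _, hmod⟩ := cyc y' 3 l' (by decide) hr
        rw [show offX 3 = 0 from rfl] at hmod
        simp only [List.length_cons] at hd
        omega
  exact fun y l h hd => key y.length y l le_rfl h hd

lemma L9 (y : List (Fin 8)) (l) (h : MX.RunFrom 0 y l) (hy : y.length = 9) :
    y = 3 :: cw 3 8 ∧ l = 0 :: cl 3 8 := by
  rcases run0 y l h with ⟨y', l', rfl, rfl, hr⟩ | ⟨y', l', rfl, rfl, hr⟩
  · exfalso
    simp only [List.length_cons] at hy
    exact dead y' l' hr (by omega)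
  · obtain ⟨h1, h2, _⟩ := cyc y' 3 l' (by decide) hr
    simp only [List.length_cons] at hy
    rw [show y'.length = 8 by omega] at h1 h2
    exact ⟨by rw [← h1], by rw [← h2]⟩

lemma L15 (y : List (Fin 8)) (l) (h : MX.RunFrom 0 y l) (hy : y.length = 15) :
    y = xw ∧ l = [0,1,2,0,1,2,0,3,4,5,6,3,4,5,6,3] := by
  rcases run0 y l h with ⟨y', l', rfl, rfl, hr⟩ | ⟨y', l', rfl, rfl, hr⟩
  · -- length 12 from 0
    rcases run0 y' l' hr with ⟨y2, l2, rfl, rfl, hr2⟩ | ⟨y2, l2, rfl, rfl, hr2⟩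
    · -- length 9 from 0
      simp only [List.length_cons] at hy
      obtain ⟨rfl, rfl⟩ := L9 y2 l2 hr2 (by omega)
      constructor
      · show _ = xw; decide
      · decide
    · obtain ⟨_, _, hmod⟩ := cyc y2 3 l2 (by decide) hr2
      rw [show offX 3 = 0 from rfl] at hmod
      simp only [List.length_cons] at hy
      omega
  · obtain ⟨_, _, hmod⟩ := cyc y' 3 l' (by decide) hr
    rw [show offX 3 = 0 from rfl] at hmod
    simp only [List.length_cons] at hy
    omega

lemma exRun : MX.RunFrom 0 xw [0,1,2,0,1,2,0,3,4,5,6,3,4,5,6,3] :=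
  ⟨1, [1,2,0,1,2,0,3,4,5,6,3,4,5,6,3], (by decide : stepX 0 0 1), ⟨2, [2,0,1,2,0,3,4,5,6,3,4,5,6,3], (by decide : stepX 1 1 2), ⟨0, [0,1,2,0,3,4,5,6,3,4,5,6,3], (by decide : stepX 2 2 0), ⟨1, [1,2,0,3,4,5,6,3,4,5,6,3], (by decide : stepX 0 0 1), ⟨2, [2,0,3,4,5,6,3,4,5,6,3], (by decide : stepX 1 1 2), ⟨0, [0,3,4,5,6,3,4,5,6,3], (by decide : stepX 2 2 0), ⟨3, [3,4,5,6,3,4,5,6,3], (by decide : stepX 0 3 3), ⟨4, [4,5,6,3,4,5,6,3], (by decide : stepX 3 4 4), ⟨5, [5,6,3,4,5,6,3], (by decide : stepX 4 5 5), ⟨6, [6,3,4,5,6,3], (by decide : stepX 5 6 6), ⟨3, [3,4,5,6,3], (by decide : stepX 6 7 3), ⟨4, [4,5,6,3], (by decide : stepX 3 4 4), ⟨5, [5,6,3], (by decide : stepX 4 5 5), ⟨6, [6,3], (by decide : stepX 5 6 6), ⟨3, [3], (by decide : stepX 6 7 3), ⟨rfl, rfl⟩, rfl⟩, rfl⟩,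 rfl⟩, rfl⟩, rfl⟩, rfl⟩, rfl⟩, rfl⟩, rfl⟩, rfl⟩, rfl⟩, rfl⟩, rfl⟩, rfl⟩, rfl⟩

lemma uniq : MX.UniquelyAccepts xw := by
  constructor
  · exact ⟨_, exRun⟩
  · intro y l y' l' hy hy' h h'
    obtain ⟨e1, e2⟩ := L15 y l h (by rw [hy]; rfl)
    obtain ⟨e1', e2'⟩ := L15 y' l' h' (by rw [hy']; rfl)
    rw [e1, e2, e1', e2']
    exact ⟨rfl, rfl⟩

lemma nofac : ∀ (s p L : Fin 16), ¬(0 < p.val ∧ 2*p.val < L.val ∧ s.val + L.val ≤ 15 ∧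
    ∀ i : Fin 16, i.val + p.val < L.val →
      xw[s.val+i.val]? = xw[s.val+i.val+p.val]?) := by decide

/-- There exists an overlap-free word `x` of odd length over some finite alphabet
which is `A_N`-simple, i.e. `A_N(x) < ⌊|x|/2⌋ + 1`.  (Overlap-free: for every
rational `α > 2`, no factor of `x` is an `α`-power of a nonempty word.) -/
theorem exists_AN_simple_overlapFree_odd :
    ∃ (k : ℕ) (x : List (Fin k)), Odd x.length ∧
      (∀ α : ℚ, 2 < α →
        ¬ ∃ (u w v z : List (Fin k)), x = u ++ w ++ v ∧ z ≠ [] ∧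
            (w.length : ℚ) = α * (z.length : ℚ) ∧
            ∀ i, i < w.length → w[i]? = z[i % z.length]?) ∧
      AN x < x.length / 2 + 1 := by
  refine ⟨8, xw, ?_, ?_, ?_⟩
  · rw [show xw.length = 15 from rfl]
    exact ⟨7, by norm_num⟩
  · rintro α hα ⟨u, w, v, z, hx, hz, hlen, hper⟩
    set s := u.length with hs
    set p := z.length with hp
    set L := w.length with hL
    have hp0 : 0 < p := List.length_pos_iff.mpr hz
    have htot : s + L + v.length = 15 := by
      have h15 := congrArg List.length hx
      rw [show xw.length = 15 from rfl] at h15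
      simp only [List.length_append] at h15
      omega
    have h2p : 2 * p < L := by
      have hq : (2:ℚ) * (p:ℚ) < (L:ℚ) := by
        rw [hlen]
        exact mul_lt_mul_of_pos_right hα (by exact_mod_cast hp0)
      exact_mod_cast hq
    have key : ∀ j, j < L → xw[s+j]? = w[j]? := by
      intro j hj
      rw [hx, List.getElem?_append_left (by simp only [List.length_append]; omega),
        List.getElem?_append_right (by omega)]
      congr 1
      omega
    refine nofac ⟨s, by omega⟩ ⟨p, by omega⟩ ⟨L, by omega⟩ ⟨hp0, h2p, show s + L ≤ 15 by omega, ?_⟩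
    intro i hip
    show xw[s + i.val]? = xw[s + i.val + p]?
    have hip' : i.val + p < L := hip
    rw [key i.val (by omega), hper i.val (by omega),
      show s + i.val + p = s + (i.val + p) from by omega,
      key (i.val + p) (by omega), hper (i.val + p) (by omega), Nat.add_mod_right]
  · have h7 : AN xw ≤ 7 := Nat.sInf_le ⟨MX, uniq⟩
    rw [show xw.length = 15 from rfl]
    omega
end

section
/- For every integer c ≥ 1 there exists N such that for all n ≥ N the following holds: for every choice of positions 0 ≤ p_1 < p_2 < ... < p_c < n and bits v_1,...,v_c ∈ {0,1}, there exist words x, x' ∈ {0,1}^n, both satisfying x(p_i) = v_i and x'(p_i) = v_i for all i, such that A_N(x) > n/3 and A_N(x') ≤ n/3. (This is the combinatorial content of the theorem that L_{2,3} = {x ∈ {0,1}* : A_N(x) > |x|/3} is SAC⁰-immune and SAC⁰-coimmune: no depth-0 semi-unbounded fan-in circuit condition on boundedly many bits can force membership in, or exclusion from, L_{2,3}.) -/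
/-!
Lower bound. Fix the run of an `m`-state automaton accepting `x` uniquely among words of
length `n`. Cutting one loop of the run out and splicing another one in, or swapping two
consecutive loops at the same state, gives an accepting run of the same length, hence on `x`
itself; so `x` is periodic on the segment that moved. If all factors of `x` of length `K` are
distinct, this forces every third or later visit of a state to come fewer than `K` steps after
the previous one, and the visits with a given return gap to lie within `K` consecutive times;
counting gives `n + 1 ≤ 2 m + K²`. Words with distinct factors of length `K ≈ c + 2 log₂ n`
and any `c` prescribed letters exist by counting, and then `m > n / 3`.

Upper bound. A word whose prefix of length `4 g` has period `g` is accepted uniquely by a cycle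
of length `g` with a tail of `n - 4 g` states; this is at most `n / 3` states once `9 g ≥ 2 n`.
Choosing `g` so that no two prescribed positions below `4 g` differ by `g`, `2 g` or `3 g`, the
prescribed letters are compatible with the period.
-/

namespace NFAc

variable {σ : Type} {m : ℕ} (M : NFAc σ m)

def IsRun (n : ℕ) (ξ : ℕ → σ) (w : ℕ → Fin m) : Prop :=
  (∀ j < n, M.step (w j) (ξ j) (w (j + 1))) ∧ M.accept (w n)

variable {M}

theorem runFrom_ofFn_iff {n : ℕ} {ξ : ℕ → σ} {s : Fin m} {l : List (Fin m)} :
    M.RunFrom s (List.ofFn fun j : Fin n => ξ j) l ↔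
      ∃ w : ℕ → Fin m, w 0 = s ∧ M.IsRun n ξ w ∧ l = List.ofFn fun j : Fin (n + 1) => w j := by
  induction n generalizing ξ s l with
  | zero =>
    refine ⟨fun ⟨hl, hs⟩ => ⟨fun _ => s, rfl, ⟨by simp, hs⟩, by simpa using hl⟩, ?_⟩
    rintro ⟨w, rfl, ⟨-, hacc⟩, rfl⟩
    exact ⟨by simp, hacc⟩
  | succ n ih =>
    rw [List.ofFn_succ]
    simp only [Fin.val_zero, Fin.val_succ]
    constructor
    · rintro ⟨q, l', hstep, hrun, rfl⟩
      obtain ⟨w, rfl, ⟨hsteps, hacc⟩, rfl⟩ := (ih (ξ := fun j => ξ (j + 1))).1 hrun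
      refine ⟨fun j => Nat.casesOn j s w, rfl, ⟨fun j hj => ?_, hacc⟩, ?_⟩
      · cases j with
        | zero => exact hstep
        | succ j => exact hsteps j (by omega)
      · rw [List.ofFn_succ (n := n + 1)]; rfl
    · rintro ⟨w, rfl, ⟨hsteps, hacc⟩, rfl⟩
      have hrun := (ih (ξ := fun j => ξ (j + 1))).2
        ⟨fun j => w (j + 1), rfl, ⟨fun j hj => hsteps (j + 1) (by omega), hacc⟩, rfl⟩
      refine ⟨w 1, _, hsteps 0 (by omega), hrun, ?_⟩
      rw [List.ofFn_succ]; rfl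

namespace UniquelyAccepts

variable {n : ℕ} {ξ : ℕ → σ}

theorem exists_isRun (hu : M.UniquelyAccepts (List.ofFn fun j : Fin n => ξ j)) :
    ∃ w : ℕ → Fin m, w 0 = M.start ∧ M.IsRun n ξ w := by
  obtain ⟨l, hl⟩ := hu.1
  obtain ⟨w, hw0, hw, -⟩ := runFrom_ofFn_iff.1 hl
  exact ⟨w, hw0, hw⟩

theorem apply_eq_of_isRun (hu : M.UniquelyAccepts (List.ofFn fun j : Fin n => ξ j))
    {ξ' : ℕ → σ} {w : ℕ → Fin m} (hw0 : w 0 = M.start) (hw : M.IsRun n ξ' w) {j : ℕ}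
    (hj : j < n) : ξ' j = ξ j := by
  obtain ⟨l, hl⟩ := hu.1
  have hrun := runFrom_ofFn_iff.2 ⟨w, hw0, hw, rfl⟩
  exact congrFun (List.ofFn_inj.1 (hu.2 _ _ _ _ (by simp) (by simp) hrun hl).1) ⟨j, hj⟩

theorem apply_comp_eq (hu : M.UniquelyAccepts (List.ofFn fun j : Fin n => ξ j))
    {w : ℕ → Fin m} (hw0 : w 0 = M.start) (hw : M.IsRun n ξ w) (F : ℕ → ℕ)
    (hF0 : w (F 0) = w 0) (hFn : F n = n) (hFlt : ∀ j < n, F j < n)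
    (hFstep : ∀ j < n, w (F (j + 1)) = w (F j + 1)) {j : ℕ} (hj : j < n) : ξ (F j) = ξ j :=
  hu.apply_eq_of_isRun (w := w ∘ F) (hF0.trans hw0)
    ⟨fun i hi => hFstep i hi ▸ hw.1 _ (hFlt i hi), by rw [Function.comp_apply, hFn]; exact hw.2⟩
    hj

theorem apply_add_eq_of_equal_loops (hu : M.UniquelyAccepts (List.ofFn fun j : Fin n => ξ j))
    {w : ℕ → Fin m} (hw0 : w 0 = M.start) (hw : M.IsRun n ξ w) {t s a : ℕ} (hts : t ≤ s)
    (hsn : s + a ≤ n) (ht : w t = w (t + a)) (hs : w s = w (s + a)) {j : ℕ} (hj : t ≤ j)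
    (hjs : j < s) : ξ (j + a) = ξ j := by
  -- go around the loop at `t` twice and skip the loop at `s`
  have key := hu.apply_comp_eq hw0 hw (fun i => if t ≤ i ∧ i < s then i + a else i)
    ?_ ?_ ?_ ?_ (j := j) (by omega)
  · simpa [hj, hjs] using key
  · split_ifs with h
    · obtain rfl : t = 0 := by omega
      exact ht.symm
    · rfl
  · split_ifs <;> omega
  · intro i hi; split_ifs <;> omega
  · intro i hi
    split_ifs
    all_goals first
      | rfl
      | (congr 1; omega)
      | (convert ht.symm using 2 <;> omega)
      | (convert hs using 2 <;> omega)

theorem apply_add_eq_of_consecutive_loops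
    (hu : M.UniquelyAccepts (List.ofFn fun j : Fin n => ξ j))
    {w : ℕ → Fin m} (hw0 : w 0 = M.start) (hw : M.IsRun n ξ w) {t a b : ℕ}
    (hn : t + a + b ≤ n) (h₁ : w t = w (t + a)) (h₂ : w (t + a) = w (t + a + b)) {j : ℕ}
    (hj : t ≤ j) (hjb : j < t + b) : ξ (j + a) = ξ j := by
  -- go around the loops at `t` and at `t + a` in the opposite order
  have key := hu.apply_comp_eq hw0 hw (fun i =>
      if t ≤ i ∧ i < t + b then i + a else if t + b ≤ i ∧ i < t + a + b then i - b else i)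
    ?_ ?_ ?_ ?_ (j := j) (by omega)
  · simpa [hj, hjb] using key
  · split_ifs with h h'
    · obtain rfl : t = 0 := by omega
      exact h₁.symm
    · omega
    · rfl
  · split_ifs <;> omega
  · intro i hi; split_ifs <;> omega
  · intro i hi
    split_ifs
    all_goals first
      | rfl
      | (congr 1; omega)
      | (convert h₁.symm using 2 <;> omega)
      | (convert h₁.trans h₂ using 2 <;> omega)
      | (convert h₂.symm using 2 <;> omega)

end UniquelyAccepts

end NFAc

section Revisits

open Finset

variable {α : Type*} [DecidableEq α] (w : ℕ → α)

def priorVisits (t : ℕ) : ℕ := #{s ∈ range t | w s = w t}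

def lastVisit (t : ℕ) : ℕ := Nat.findGreatest (fun s => s < t ∧ w s = w t) t

variable {w}

theorem priorVisits_lt_priorVisits {t t' : ℕ} (h : t < t') (hw : w t = w t') :
    priorVisits w t < priorVisits w t' := by
  refine card_lt_card ((ssubset_iff_of_subset fun s hs => ?_).2 ⟨t, ?_, ?_⟩)
  · simp only [mem_filter, mem_range] at hs ⊢
    exact ⟨hs.1.trans h, hs.2.trans hw⟩
  · simpa using ⟨h, hw⟩
  · simp

theorem le_lastVisit {s t : ℕ} (hs : s < t) (hw : w s = w t) :
    s ≤ lastVisit w t ∧ lastVisit w t < t ∧ w (lastVisit w t) = w t :=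
  ⟨Nat.le_findGreatest hs.le ⟨hs, hw⟩,
    Nat.findGreatest_spec (P := fun s => s < t ∧ w s = w t) hs.le ⟨hs, hw⟩⟩

theorem exists_lt_lastVisit {t : ℕ} (h : 2 ≤ priorVisits w t) :
    ∃ s < lastVisit w t, w s = w t ∧ lastVisit w t < t ∧ w (lastVisit w t) = w t := by
  obtain ⟨s₁, hs₁, s₂, hs₂, hne⟩ := one_lt_card.1 h
  simp only [mem_filter, mem_range] at hs₁ hs₂
  obtain ⟨h₁, hlt, hlast⟩ := le_lastVisit hs₁.1 hs₁.2
  obtain ⟨h₂, -, -⟩ := le_lastVisit hs₂.1 hs₂.2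
  rcases lt_or_gt_of_ne hne with h | h
  · exact ⟨s₁, by omega, hs₁.2, hlt, hlast⟩
  · exact ⟨s₂, by omega, hs₂.2, hlt, hlast⟩

theorem card_priorVisits_lt_two_le [Fintype α] (n : ℕ) :
    #{t ∈ range (n + 1) | priorVisits w t < 2} ≤ 2 * Fintype.card α := by
  calc #{t ∈ range (n + 1) | priorVisits w t < 2}
      ≤ #((univ : Finset α) ×ˢ range 2) := by
        refine card_le_card_of_injOn (fun t => (w t, priorVisits w t)) (fun t ht => ?_) ?_
        · rw [mem_coe, mem_filter] at ht
          simpa using ht.2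
        · intro t _ t' _ h
          simp only [Prod.mk.injEq] at h
          by_contra hne
          rcases lt_or_gt_of_ne hne with hlt | hlt
          · exact (priorVisits_lt_priorVisits hlt h.1).ne h.2
          · exact (priorVisits_lt_priorVisits hlt h.1.symm).ne h.2.symm
    _ = 2 * Fintype.card α := by simp [mul_comm]

/-- A time with at least two earlier visits to its state is encoded by its return gap to the
last visit, which is `< K`, and its residue mod `K`: times with equal gaps are `< K` apart. -/
theorem card_two_le_priorVisits_le {n K : ℕ}
    (hconsec : ∀ t a b, 0 < a → 0 < b → t + a + b ≤ n → w t = w (t + a) →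
      w (t + a) = w (t + a + b) → b < K)
    (hequal : ∀ t s a, 0 < a → t ≤ s → s + a ≤ n → w t = w (t + a) → w s = w (s + a) →
      s < t + K) :
    #{t ∈ range (n + 1) | 2 ≤ priorVisits w t} ≤ K * K := by
  set T := {t ∈ range (n + 1) | 2 ≤ priorVisits w t} with hT
  have hgap : ∀ t ∈ T, t ≤ n ∧ lastVisit w t < t ∧ w (lastVisit w t) = w t ∧
      t - lastVisit w t < K := by
    intro t ht
    rw [hT, mem_filter, mem_range] at ht
    obtain ⟨s, hs, hws, hlt, hlast⟩ := exists_lt_lastVisit ht.2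
    refine ⟨by omega, hlt, hlast, ?_⟩
    have := hconsec s (lastVisit w t - s) (t - lastVisit w t) (by omega) (by omega) (by omega)
    rw [Nat.add_sub_cancel' hs.le, Nat.add_sub_cancel' hlt.le] at this
    exact this (by rw [hws, hlast]) hlast
  have hmod : ∀ t ∈ T, ∀ t' ∈ T, t < t' → t - lastVisit w t = t' - lastVisit w t' →
      t % K ≠ t' % K := by
    intro t ht t' ht' hlt hgap_eq hmod
    obtain ⟨-, hl, hw, -⟩ := hgap t ht
    obtain ⟨hn', hl', hw', -⟩ := hgap t' ht'
    have := hequal (lastVisit w t) (lastVisit w t') (t - lastVisit w t) (by omega) (by omega)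
      (by omega) (by rw [Nat.add_sub_cancel' hl.le, hw]) (by
        rw [hgap_eq, Nat.add_sub_cancel' hl'.le, hw'])
    have := Nat.eq_zero_of_dvd_of_lt
      (Nat.dvd_of_mod_eq_zero (Nat.sub_mod_eq_zero_of_mod_eq hmod.symm)) (by omega)
    omega
  calc #T ≤ #(range K ×ˢ range K) := by
        refine card_le_card_of_injOn (fun t => (t - lastVisit w t, t % K)) (fun t ht => ?_) ?_
        · have := (hgap t ht).2.2.2
          simpa using ⟨this, Nat.mod_lt t (by omega)⟩
        · intro t ht t' ht' h
          simp only [Prod.mk.injEq] at h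
          by_contra hne
          rcases lt_or_gt_of_ne hne with hlt | hlt
          · exact hmod t ht t' ht' hlt h.1 h.2
          · exact hmod t' ht' t ht hlt h.1.symm h.2.symm
    _ = K * K := by simp

theorem le_two_mul_card_add_mul_self [Fintype α] {n K : ℕ}
    (hconsec : ∀ t a b, 0 < a → 0 < b → t + a + b ≤ n → w t = w (t + a) →
      w (t + a) = w (t + a + b) → b < K)
    (hequal : ∀ t s a, 0 < a → t ≤ s → s + a ≤ n → w t = w (t + a) → w s = w (s + a) →
      s < t + K) :
    n + 1 ≤ 2 * Fintype.card α + K * K := by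
  have := card_filter_add_card_filter_not (s := range (n + 1)) (fun t => priorVisits w t < 2)
  simp only [card_range, not_lt] at this
  have := card_priorVisits_lt_two_le (w := w) n
  have := card_two_le_priorVisits_le hconsec hequal
  omega

end Revisits

def HasDistinctFactors {σ : Type} (ξ : ℕ → σ) (n K : ℕ) : Prop :=
  ∀ t a, 0 < a → t + a + K ≤ n → ∃ j, t ≤ j ∧ j < t + K ∧ ξ (j + a) ≠ ξ j

theorem NFAc.UniquelyAccepts.add_one_le_of_hasDistinctFactors {σ : Type} {m n K : ℕ}
    {M : NFAc σ m} {ξ : ℕ → σ}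
    (hu : M.UniquelyAccepts (List.ofFn fun j : Fin n => ξ j)) (hξ : HasDistinctFactors ξ n K) :
    n + 1 ≤ 2 * m + K * K := by
  obtain ⟨w, hw0, hw⟩ := hu.exists_isRun
  simpa using le_two_mul_card_add_mul_self (w := w)
    (fun t a b ha _ hn h₁ h₂ => by
      by_contra hK
      obtain ⟨j, hj, hjK, hne⟩ := hξ t a ha (by omega)
      exact hne (hu.apply_add_eq_of_consecutive_loops hw0 hw hn h₁ h₂ hj (by omega)))
    (fun t s a ha hts hsn h₁ h₂ => by
      by_contra hK
      obtain ⟨j, hj, hjK, hne⟩ := hξ t a ha (by omega)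
      exact hne (hu.apply_add_eq_of_equal_loops hw0 hw hts hsn h₁ h₂ hj (by omega)))

namespace NFAc

variable {σ : Type}

theorem runFrom_unique {m : ℕ} {M : NFAc σ m}
    (h : ∀ s a a' q q' y y' l l', M.step s a q → M.step s a' q' → M.RunFrom q y l →
      M.RunFrom q' y' l' → y.length = y'.length → a = a' ∧ q = q')
    {s : Fin m} {y y' : List σ} {l l' : List (Fin m)} (hl : M.RunFrom s y l)
    (hl' : M.RunFrom s y' l') (hlen : y.length = y'.length) : y = y' ∧ l = l' := by
  induction y generalizing s y' l l' with
  | nil =>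
    obtain rfl := List.eq_nil_of_length_eq_zero hlen.symm
    exact ⟨rfl, hl.1.trans hl'.1.symm⟩
  | cons a y ih =>
    obtain ⟨a', y', rfl⟩ := List.exists_cons_of_length_eq_add_one hlen.symm
    obtain ⟨q, l, hs, hl, rfl⟩ := hl
    obtain ⟨q', l', hs', hl', rfl⟩ := hl'
    have hlen' : y.length = y'.length := by simpa using hlen
    obtain ⟨rfl, rfl⟩ := h _ _ _ _ _ _ _ _ _ hs hs' hl hl' hlen'
    obtain ⟨rfl, rfl⟩ := ih hl hl' hlen'
    exact ⟨rfl, rfl⟩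

/-- A cycle `0 → 1 → ⋯ → g - 1 → 0` reading `cyc`, and an exit from `0` into the path
`g → g + 1 → ⋯ → g + K - 1` whose edge into state `g + i` reads `tail i`. -/
def lasso (g K : ℕ) (hg : 0 < g) (cyc tail : ℕ → σ) : NFAc σ (g + K) where
  start := ⟨0, by omega⟩
  accept s := (s : ℕ) = g + K - 1
  step s a t := ((s : ℕ) < g ∧ (t : ℕ) = (s + 1) % g ∧ a = cyc s) ∨
    (((s : ℕ) = 0 ∧ (t : ℕ) = g ∨ g ≤ (s : ℕ) ∧ (t : ℕ) = s + 1) ∧ a = tail (t - g))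

variable {g K : ℕ} {hg : 0 < g} {cyc tail : ℕ → σ}

theorem lasso_runFrom_length {s : Fin (g + K)} {y : List σ} {l : List (Fin (g + K))}
    (hs : g ≤ s) (h : (lasso g K hg cyc tail).RunFrom s y l) : s + y.length = g + K - 1 := by
  induction y generalizing s l with
  | nil => exact h.2
  | cons a y ih =>
    obtain ⟨q, l', hstep, hrun, rfl⟩ := h
    rcases hstep with ⟨_, _, _⟩ | ⟨⟨_, _⟩ | ⟨_, hq⟩, _⟩
    · omega
    · omega
    · have := ih (by omega) hrun
      simp only [List.length_cons]
      omega

theorem lasso_le_length (hK : 0 < K) {s : Fin (g + K)} {y : List σ} {l : List (Fin (g + K))}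
    (hs : s < g) (h : (lasso g K hg cyc tail).RunFrom s y l) : K ≤ y.length := by
  induction y generalizing s l with
  | nil => have : (s : ℕ) = g + K - 1 := h.2; omega
  | cons a y ih =>
    obtain ⟨q, l', hstep, hrun, rfl⟩ := h
    simp only [List.length_cons]
    rcases hstep with ⟨_, hq, _⟩ | ⟨⟨_, hq⟩ | ⟨_, _⟩, _⟩
    · have := ih (hq ▸ Nat.mod_lt _ hg) hrun
      omega
    · have := lasso_runFrom_length (by omega) hrun
      omega
    · omega

theorem lasso_step_unique (hK : 0 < K) :
    ∀ s a a' q q' y y' l l', (lasso g K hg cyc tail).step s a q →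
      (lasso g K hg cyc tail).step s a' q' → (lasso g K hg cyc tail).RunFrom q y l →
      (lasso g K hg cyc tail).RunFrom q' y' l' → y.length = y'.length → a = a' ∧ q = q' := by
  intro s a a' q q' y y' l l' hs hs' hl hl' hlen
  rcases hs with ⟨hs, hq, rfl⟩ | ⟨hq, rfl⟩ <;> rcases hs' with ⟨-, hq', rfl⟩ | ⟨hq', rfl⟩
  · exact ⟨rfl, Fin.ext (hq.trans hq'.symm)⟩
  · have := lasso_le_length hK (hq ▸ Nat.mod_lt _ hg) hl
    have := lasso_runFrom_length (by omega) hl'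
    omega
  · have := lasso_runFrom_length (by omega) hl
    have := lasso_le_length hK (hq' ▸ Nat.mod_lt _ hg) hl'
    omega
  · obtain rfl : q = q' := Fin.ext (by omega)
    exact ⟨rfl, rfl⟩

theorem lasso_uniquelyAccepts {ξ : ℕ → σ} {r n : ℕ} (hrn : r * g < n)
    (hper : ∀ j < r * g, ξ j = ξ (j % g)) :
    (lasso g (n - r * g) hg ξ (fun i => ξ (r * g + i))).UniquelyAccepts
      (List.ofFn fun j : Fin n => ξ j) := by
  refine ⟨?_, fun y l y' l' hy hy' h h' =>
    runFrom_unique (lasso_step_unique (by omega)) h h' (hy.trans hy'.symm)⟩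
  have hmod : ∀ j, j % g < g := fun j => Nat.mod_lt j hg
  -- `r` times around the cycle, then along the tail; the `min` only keeps `w` in range
  let w : ℕ → Fin (g + (n - r * g)) := fun j =>
    ⟨if j ≤ r * g then j % g else min (g + (j - r * g)) (g + (n - r * g)) - 1, by
      have := hmod j; split_ifs <;> omega⟩
  have hw : ∀ j, (w j : ℕ) = if j ≤ r * g then j % g else
      min (g + (j - r * g)) (g + (n - r * g)) - 1 := fun j => rfl
  have hw0 : w 0 = (lasso g (n - r * g) hg ξ (fun i => ξ (r * g + i))).start :=
    Fin.ext (by rw [hw, if_pos (Nat.zero_le _), Nat.zero_mod]; rfl)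
  refine ⟨_, runFrom_ofFn_iff.2 ⟨w, hw0, ⟨fun j hj => ?_, ?_⟩, rfl⟩⟩
  · rcases lt_trichotomy j (r * g) with hj' | rfl | hj'
    · have e₁ : (w j : ℕ) = j % g := by rw [hw, if_pos hj'.le]
      have e₂ : (w (j + 1) : ℕ) = (j + 1) % g := by rw [hw, if_pos (show j + 1 ≤ r * g from hj')]
      exact Or.inl ⟨e₁ ▸ hmod j, by rw [e₁, e₂, Nat.mod_add_mod], by rw [e₁, ← hper j hj']⟩
    · have e₁ : (w (r * g) : ℕ) = 0 := by rw [hw, if_pos le_rfl, Nat.mul_mod_left]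
      have e₂ : (w (r * g + 1) : ℕ) = g := by rw [hw, if_neg (by omega)]; omega
      exact Or.inr ⟨Or.inl ⟨e₁, e₂⟩, by rw [e₂, Nat.sub_self]; rfl⟩
    · have e₁ : (w j : ℕ) = g + (j - r * g) - 1 := by rw [hw, if_neg (by omega)]; omega
      have e₂ : (w (j + 1) : ℕ) = g + (j - r * g) := by rw [hw, if_neg (by omega)]; omega
      refine Or.inr ⟨Or.inr ⟨by omega, by omega⟩, ?_⟩
      show ξ j = ξ (r * g + ((w (j + 1) : ℕ) - g))
      rw [e₂, Nat.add_sub_cancel_left, Nat.add_sub_cancel' hj'.le]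
  · show (w n : ℕ) = _
    rw [hw, if_neg hrn.not_ge]
    omega

end NFAc

section Counting

open Finset

theorem extend_fin_val_of_lt {σ : Type*} {n j : ℕ} (f : Fin n → σ) (u : ℕ → σ) (h : j < n) :
    Function.extend Fin.val f u j = f ⟨j, h⟩ :=
  Fin.val_injective.extend_apply f u ⟨j, h⟩

theorem extend_fin_val_of_le {σ : Type*} {n j : ℕ} (f : Fin n → σ) (u : ℕ → σ) (h : n ≤ j) :
    Function.extend Fin.val f u j = u j :=
  Function.extend_apply' _ _ _ fun ⟨i, hi⟩ => by omega

theorem card_mul_pow_le_of_overwrite {ι σ : Type*} [Fintype ι] [DecidableEq ι]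
    [Fintype σ] (B : Finset ι) {S T : Finset (ι → σ)}
    (hS : ∀ f ∈ T, ∀ e : B → σ, (fun i => if h : i ∈ B then e ⟨i, h⟩ else f i) ∈ S)
    (hT : ∀ f ∈ T, ∀ f' ∈ T, (∀ i ∉ B, f i = f' i) → f = f') :
    #T * Fintype.card σ ^ #B ≤ #S := by
  calc #T * Fintype.card σ ^ #B = #(T ×ˢ (univ : Finset (B → σ))) := by simp
    _ ≤ #S := by
      refine card_le_card_of_injOn (fun fe i => if h : i ∈ B then fe.2 ⟨i, h⟩ else fe.1 i)
        (fun fe hfe => hS _ (mem_product.1 hfe).1 _) ?_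
      rintro ⟨f, e⟩ hfe ⟨f', e'⟩ hfe' h
      have h := congrFun h
      simp only [coe_product, Set.mem_prod, mem_coe] at hfe hfe'
      refine Prod.ext (hT f hfe.1 f' hfe'.1 fun i hi => by simpa [hi] using h i) ?_
      funext ⟨i, hi⟩
      simpa [hi] using h i

theorem eq_of_shift_eq_on_window {σ : Type*} {ξ ξ' : ℕ → σ} {t a K : ℕ} (ha : 0 < a)
    (hξ : ∀ j, t ≤ j → j < t + K → ξ (j + a) = ξ j)
    (hξ' : ∀ j, t ≤ j → j < t + K → ξ' (j + a) = ξ' j)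
    (h : ∀ j, ξ j ≠ ξ' j → t + a ≤ j ∧ j < t + a + K) : ξ = ξ' := by
  funext j
  induction j using Nat.strong_induction_on with
  | _ j ih =>
    by_contra hne
    obtain ⟨h₁, h₂⟩ := h j hne
    have := hξ (j - a) (by omega) (by omega)
    have := hξ' (j - a) (by omega) (by omega)
    rw [Nat.sub_add_cancel (by omega)] at *
    exact hne (by rw [‹ξ j = _›, ‹ξ' j = _›, ih (j - a) (by omega)])

variable {σ : Type} [Fintype σ] [DecidableEq σ]

def extensionsOn (n : ℕ) (P : Finset ℕ) (u : ℕ → σ) : Finset (Fin n → σ) :=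
  {f | ∀ j : Fin n, (j : ℕ) ∈ P → f j = u j}

theorem card_filter_shift_eq_mul_pow_le (P : Finset ℕ) (u : ℕ → σ) {n t a K : ℕ} (ha : 0 < a)
    (hn : t + a + K ≤ n) :
    #{f ∈ extensionsOn n P u | ∀ j, t ≤ j → j < t + K →
        Function.extend Fin.val f u (j + a) = Function.extend Fin.val f u j} *
      Fintype.card σ ^ (K - #P) ≤ #(extensionsOn n P u) := by
  let B : Finset (Fin n) := {j | t + a ≤ j ∧ j < t + a + K ∧ (j : ℕ) ∉ P}
  have hB : K - #P ≤ #B :=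
    calc K - #P ≤ #(Ico (t + a) (t + a + K) \ P) := by
          simpa using le_card_sdiff P (Ico (t + a) (t + a + K))
      _ ≤ #(B.map Fin.valEmbedding) := card_le_card fun j hj => by
          simp only [mem_sdiff, mem_Ico] at hj
          simpa [B] using ⟨⟨j, by omega⟩, ⟨hj.1.1, hj.1.2, hj.2⟩, rfl⟩
      _ = #B := card_map _
  refine (Nat.mul_le_mul_left _ (Nat.pow_le_pow_right (Fintype.card_pos_iff.2 ⟨u 0⟩) hB)).trans
    (card_mul_pow_le_of_overwrite B (fun f hf e => ?_) fun f hf f' hf' hff' => ?_)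
  · simp only [extensionsOn, mem_filter, mem_univ, true_and] at hf ⊢
    intro j hj
    simp [B, hj, hf.1 j hj]
  · simp only [extensionsOn, mem_filter, mem_univ, true_and] at hf hf'
    have := eq_of_shift_eq_on_window ha hf.2 hf'.2 fun j hj => by
      by_cases hjn : j < n
      · have hjB : ⟨j, hjn⟩ ∈ B := by
          by_contra hjB
          exact hj (by simp [extend_fin_val_of_lt _ _ hjn, hff' ⟨j, hjn⟩ hjB])
        simp only [B, mem_filter, mem_univ, true_and] at hjB
        exact ⟨hjB.1, hjB.2.1⟩
      · simp [extend_fin_val_of_le _ _ (not_lt.1 hjn)] at hj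
    funext j
    simpa [extend_fin_val_of_lt _ _ j.2] using congrFun this j

theorem exists_hasDistinctFactors (P : Finset ℕ) (u : ℕ → σ) {n K : ℕ}
    (h : (n + 1) ^ 2 < Fintype.card σ ^ (K - #P)) :
    ∃ ξ : ℕ → σ, (∀ j ∈ P, ξ j = u j) ∧ HasDistinctFactors ξ n K := by
  let E := extensionsOn n P u
  let windows := {ta ∈ range (n + 1) ×ˢ range (n + 1) | 0 < ta.2 ∧ ta.1 + ta.2 + K ≤ n}
  let repeats : ℕ × ℕ → Finset (Fin n → σ) := fun ta => {f ∈ E | ∀ j, ta.1 ≤ j →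
    j < ta.1 + K → Function.extend Fin.val f u (j + ta.2) = Function.extend Fin.val f u j}
  let U := windows.biUnion repeats
  have hU : #U * Fintype.card σ ^ (K - #P) ≤ (n + 1) ^ 2 * #E :=
    calc #U * Fintype.card σ ^ (K - #P)
        ≤ ∑ ta ∈ windows, #(repeats ta) * Fintype.card σ ^ (K - #P) := by
          rw [← sum_mul]
          exact Nat.mul_le_mul_right _ card_biUnion_le
      _ ≤ ∑ ta ∈ windows, #E := sum_le_sum fun ta hta =>
          card_filter_shift_eq_mul_pow_le P u (mem_filter.1 hta).2.1 (mem_filter.1 hta).2.2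
      _ ≤ (n + 1) ^ 2 * #E := by
          rw [sum_const, smul_eq_mul]
          exact Nat.mul_le_mul_right _ ((card_filter_le _ _).trans (by simp [sq]))
  have hE : 0 < #E := card_pos.2 ⟨fun j => u j, by simp [E, extensionsOn]⟩
  obtain ⟨f, hfE, hfU⟩ := exists_mem_notMem_of_card_lt_card (s := U) (t := E) (by nlinarith)
  refine ⟨Function.extend Fin.val f u, fun j hj => ?_, fun t a ha htn => ?_⟩
  · by_cases hjn : j < n
    · rw [extend_fin_val_of_lt _ _ hjn]
      exact (mem_filter.1 hfE).2 ⟨j, hjn⟩ hj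
    · exact extend_fin_val_of_le _ _ (not_lt.1 hjn)
  · by_contra! hcon
    refine hfU (mem_biUnion.2 ⟨(t, a), ?_, mem_filter.2 ⟨hfE, hcon⟩⟩)
    simp only [windows, mem_filter, mem_product, mem_range]
    omega

end Counting

theorem AN_le {σ : Type} {m : ℕ} {M : NFAc σ m} {x : List σ} (h : M.UniquelyAccepts x) :
    AN x ≤ m :=
  Nat.sInf_le ⟨M, h⟩

theorem exists_uniquelyAccepts_AN {σ : Type} {ξ : ℕ → σ} {n : ℕ} (hn : 0 < n) :
    ∃ M : NFAc σ (AN (List.ofFn fun j : Fin n => ξ j)),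
      M.UniquelyAccepts (List.ofFn fun j : Fin n => ξ j) :=
  Nat.sInf_mem (s := {m | ∃ M : NFAc σ m, M.UniquelyAccepts (List.ofFn fun j : Fin n => ξ j)})
    ⟨_, _, NFAc.lasso_uniquelyAccepts (hg := Nat.one_pos) (r := 0) (by simpa using hn) (by simp)⟩

theorem eventually_mul_sq_le_two_pow (A : ℕ) : ∀ᶠ L in Filter.atTop, A * (L + 1) ^ 2 ≤ 2 ^ L := by
  have h := (tendsto_pow_const_div_const_pow_of_one_lt 2 (by norm_num : (1 : ℝ) < 2)).comp
    (Filter.tendsto_add_atTop_nat 1)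
  filter_upwards [h.eventually (gt_mem_nhds (by positivity : (0 : ℝ) < 1 / (2 * (A + 1))))]
    with L hL
  simp only [Function.comp, Nat.cast_add, Nat.cast_one] at hL
  rw [div_lt_div_iff₀ (by positivity) (by positivity)] at hL
  have : (2 : ℝ) ^ (L + 1) = 2 * 2 ^ L := by ring
  have : (A : ℝ) * (L + 1) ^ 2 ≤ 2 ^ L := by nlinarith
  exact_mod_cast this

theorem exists_factor_length (c : ℕ) :
    ∃ N, ∀ n, N ≤ n → ∃ K, (n + 1) ^ 2 < 2 ^ (K - c) ∧ 3 * K ^ 2 ≤ n := by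
  obtain ⟨L₀, hL₀⟩ := Filter.eventually_atTop.1 (eventually_mul_sq_le_two_pow (3 * (c + 3) ^ 2))
  refine ⟨2 ^ L₀, fun n hn => ⟨c + 2 * Nat.log 2 n + 3, ?_, ?_⟩⟩
  · calc (n + 1) ^ 2 ≤ (2 ^ (Nat.log 2 n + 1)) ^ 2 :=
          Nat.pow_le_pow_left (Nat.lt_pow_succ_log_self one_lt_two n) 2
      _ = 2 ^ (2 * Nat.log 2 n + 2) := by ring
      _ < 2 ^ (c + 2 * Nat.log 2 n + 3 - c) := Nat.pow_lt_pow_right one_lt_two (by omega)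
  · calc 3 * (c + 2 * Nat.log 2 n + 3) ^ 2 ≤ 3 * ((c + 3) * (Nat.log 2 n + 1)) ^ 2 := by
          gcongr
          nlinarith
      _ = 3 * (c + 3) ^ 2 * (Nat.log 2 n + 1) ^ 2 := by ring
      _ ≤ 2 ^ Nat.log 2 n := hL₀ _ (Nat.le_log_of_pow_le one_lt_two hn)
      _ ≤ n := Nat.pow_log_le_self 2 (by have := Nat.one_le_two_pow (n := L₀); omega)

theorem exists_lt_three_mul_AN {c n K : ℕ} (hK : (n + 1) ^ 2 < 2 ^ (K - c)) (hKn : 3 * K ^ 2 ≤ n)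
    {p : Fin c → ℕ} (hp : Function.Injective p) (hpn : ∀ i, p i < n) (v : Fin c → Fin 2) :
    ∃ x : List (Fin 2), x.length = n ∧ (∀ i, x[p i]? = some (v i)) ∧ n < 3 * AN x := by
  have hP : (n + 1) ^ 2 < Fintype.card (Fin 2) ^ (K - (Finset.univ.image p).card) :=
    hK.trans_le (Nat.pow_le_pow_right two_pos (Nat.sub_le_sub_left
      (Finset.card_image_le.trans (by simp)) K))
  obtain ⟨ξ, hξp, hξ⟩ := exists_hasDistinctFactors _ (Function.extend p v 0) hP
  have hn : 0 < n := by
    have : 0 < K - c := Nat.pos_of_ne_zero fun h0 => by simp [h0] at hK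
    have : 1 ≤ K ^ 2 := Nat.one_le_pow _ _ (by omega)
    omega
  obtain ⟨M, hM⟩ := exists_uniquelyAccepts_AN (ξ := ξ) hn
  have := hM.add_one_le_of_hasDistinctFactors hξ
  refine ⟨List.ofFn fun j : Fin n => ξ j, by simp, fun i => ?_, by nlinarith⟩
  rw [List.getElem?_ofFn, dif_pos (hpn i), hξp _ (Finset.mem_image_of_mem p (Finset.mem_univ i)),
    hp.extend_apply]

theorem exists_forall_ne_mul (D : Finset ℕ) (lo r : ℕ) :
    ∃ g, lo ≤ g ∧ g ≤ lo + r * D.card ∧ ∀ d ∈ D, ∀ k, 0 < k → k < r → d ≠ k * g := by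
  let bad := (D ×ˢ Finset.range r).image fun dk => dk.1 / dk.2
  have hcard : bad.card < (Finset.Icc lo (lo + r * D.card)).card := by
    refine Finset.card_image_le.trans_lt ?_
    simp only [Finset.card_product, Finset.card_range, Nat.card_Icc]
    rw [mul_comm]
    omega
  obtain ⟨g, hg, hgbad⟩ := Finset.exists_mem_notMem_of_card_lt_card hcard
  rw [Finset.mem_Icc] at hg
  refine ⟨g, hg.1, hg.2, fun d hd k hk hkr hdk => hgbad (Finset.mem_image.2 ⟨(d, k), ?_, ?_⟩)⟩
  · simp [hd, hkr]
  · simp [hdk, Nat.mul_div_cancel_left _ hk]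

theorem eq_of_mod_eq_of_lt_mul {a b g r : ℕ} (ha : a < r * g) (hb : b < r * g)
    (hab : a % g = b % g) (h : ∀ k, 0 < k → k < r → b - a ≠ k * g)
    (h' : ∀ k, 0 < k → k < r → a - b ≠ k * g) : a = b := by
  have key : ∀ a b, a < b → b < r * g → a % g = b % g → ∃ k, 0 < k ∧ k < r ∧ b - a = k * g := by
    intro a b hlt hb hab
    obtain ⟨k, hk⟩ := Nat.dvd_of_mod_eq_zero (Nat.sub_mod_eq_zero_of_mod_eq hab.symm)
    refine ⟨k, Nat.pos_of_ne_zero fun hk0 => by rw [hk0, mul_zero] at hk; omega,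
      Nat.lt_of_mul_lt_mul_left (a := g) (by rw [mul_comm g r]; omega), by rw [hk, mul_comm]⟩
  rcases lt_trichotomy a b with hlt | rfl | hlt
  · obtain ⟨k, hk, hkr, hba⟩ := key a b hlt hb hab
    exact absurd hba (h k hk hkr)
  · rfl
  · obtain ⟨k, hk, hkr, hab'⟩ := key b a hlt ha hab.symm
    exact absurd hab' (h' k hk hkr)

theorem exists_three_mul_AN_le {c n : ℕ} (hn : 36 * (4 * c ^ 2 + 1) + 27 ≤ n)
    {p : Fin c → ℕ} (hp : Function.Injective p) (hpn : ∀ i, p i < n) (v : Fin c → Fin 2) :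
    ∃ x : List (Fin 2), x.length = n ∧ (∀ i, x[p i]? = some (v i)) ∧ 3 * AN x ≤ n := by
  let D := (Finset.univ : Finset (Fin c × Fin c)).image fun ii => p ii.1 - p ii.2
  have hD : D.card ≤ c ^ 2 := Finset.card_image_le.trans (by simp [sq])
  -- `g ≤ n / 4 - 1` gives `4 g < n`, and `g ≥ n / 4 - (4 c² + 1)` gives `2 n ≤ 9 g` by `hn`
  obtain ⟨g, hlo, hhi, hg⟩ := exists_forall_ne_mul D (n / 4 - (4 * c ^ 2 + 1)) 4
  have hg0 : 0 < g := by omega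
  have hinj : Function.Injective fun i : {i // p i < 4 * g} => p i % g := fun i i' h =>
    Subtype.ext (hp (eq_of_mod_eq_of_lt_mul i.2 i'.2 h
      (hg _ (Finset.mem_image_of_mem _ (Finset.mem_univ (i'.1, i.1))))
      (hg _ (Finset.mem_image_of_mem _ (Finset.mem_univ (i.1, i'.1))))))
  let ξ : ℕ → Fin 2 := fun j => if j < 4 * g then
    Function.extend (fun i : {i // p i < 4 * g} => p i % g) (fun i => v i) 0 (j % g)
    else Function.extend p v 0 j
  have hξ : ∀ i, ξ (p i) = v i := fun i => by
    by_cases hi : p i < 4 * g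
    · simpa [ξ, hi] using hinj.extend_apply (fun i => v i) 0 ⟨i, hi⟩
    · simp [ξ, hi, hp.extend_apply]
  have hM := NFAc.lasso_uniquelyAccepts (hg := hg0) (r := 4) (n := n) (ξ := ξ) (by omega)
    fun j hj => by simp [ξ, hj, (Nat.mod_lt j hg0).trans_le (Nat.le_mul_of_pos_left g four_pos)]
  refine ⟨List.ofFn fun j : Fin n => ξ j, by simp, fun i => ?_, ?_⟩
  · rw [List.getElem?_ofFn, dif_pos (hpn i), hξ]
  · have := AN_le hM
    omega

theorem SAC0_immune_coimmune_combinatorial_general (c : ℕ) :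
    ∃ N : ℕ, ∀ n : ℕ, N ≤ n →
      ∀ p : Fin c → ℕ, StrictMono p → (∀ i, p i < n) →
      ∀ v : Fin c → Fin 2,
      ∃ x x' : List (Fin 2), x.length = n ∧ x'.length = n ∧
        (∀ i : Fin c, x[p i]? = some (v i)) ∧
        (∀ i : Fin c, x'[p i]? = some (v i)) ∧
        (n : ℝ) / 3 < (AN x : ℝ) ∧ (AN x' : ℝ) ≤ (n : ℝ) / 3 := by
  obtain ⟨N, hN⟩ := exists_factor_length c
  refine ⟨max N (36 * (4 * c ^ 2 + 1) + 27), fun n hn p hp hpn v => ?_⟩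
  obtain ⟨K, hK, hKn⟩ := hN n (le_of_max_le_left hn)
  obtain ⟨x, hx, hxp, hxAN⟩ := exists_lt_three_mul_AN hK hKn hp.injective hpn v
  obtain ⟨x', hx', hx'p, hx'AN⟩ :=
    exists_three_mul_AN_le (le_of_max_le_right hn) hp.injective hpn v
  refine ⟨x, x', hx, hx', hxp, hx'p, ?_, ?_⟩
  · rw [div_lt_iff₀ three_pos]
    exact_mod_cast (by omega : n < AN x * 3)
  · rw [le_div_iff₀ three_pos]
    exact_mod_cast (by omega : AN x' * 3 ≤ n)

/-- For every `c ≥ 1` and all sufficiently large `n`: for any positions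
`0 ≤ p 0 < ⋯ < p (c-1) < n` and prescribed bits `v i`, there are words
`x, x' ∈ {0,1}ⁿ` both taking value `v i` at position `p i` for all `i`, with
`A_N(x) > n/3` and `A_N(x') ≤ n/3`.  (This is the combinatorial content of the
statement that `L_{2,3}` is `SAC⁰`-immune and `SAC⁰`-coimmune.) -/
theorem SAC0_immune_coimmune_combinatorial (c : ℕ) (hc : 1 ≤ c) :
    ∃ N : ℕ, ∀ n : ℕ, N ≤ n →
      ∀ p : Fin c → ℕ, StrictMono p → (∀ i, p i < n) →
      ∀ v : Fin c → Fin 2,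
      ∃ x x' : List (Fin 2), x.length = n ∧ x'.length = n ∧
        (∀ i : Fin c, x[p i]? = some (v i)) ∧
        (∀ i : Fin c, x'[p i]? = some (v i)) ∧
        (n : ℝ) / 3 < (AN x : ℝ) ∧ (AN x' : ℝ) ≤ (n : ℝ) / 3 :=
  SAC0_immune_coimmune_combinatorial_general c
end

section
/- Let n ≥ 1 and let f : (Z/2Z)^n → Z/2Z be the disjunction function, i.e., f(x) = 0 if x = (0,...,0) and f(x) = 1 otherwise. Suppose f = g_1 + g_2 + ... + g_k (pointwise sum in Z/2Z) where each g_i : (Z/2Z)^n → Z/2Z depends on at most c of the n coordinates (i.e., g_i(x) is determined by the restriction of x to some set of at most c coordinates). Then n ≤ c. (Consequently, the family of disjunction functions is in SAC⁰ but not in ⊕SAC⁰, so SAC⁰ ⊄ ⊕SAC⁰.) -/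
/-- If the disjunction function on `n ≥ 1` variables over `ℤ/2ℤ` (value `0` at the
all-zero point and `1` elsewhere) is a pointwise sum of functions each depending on at
most `c` coordinates, then `n ≤ c`.  (Hence the disjunction family witnesses
`SAC⁰ ⊄ ⊕SAC⁰`.) -/
theorem disjunction_not_sum_of_juntas (n : ℕ) (hn : 1 ≤ n) (c k : ℕ)
    (g : Fin k → (Fin n → ZMod 2) → ZMod 2)
    (hdep : ∀ i : Fin k, ∃ S : Finset (Fin n), S.card ≤ c ∧
      ∀ x y : Fin n → ZMod 2, (∀ j ∈ S, x j = y j) → g i x = g i y)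
    (hf : ∀ x : Fin n → ZMod 2,
      (if ∀ j, x j = 0 then (0 : ZMod 2) else 1) = ∑ i : Fin k, g i x) :
    n ≤ c := by
  by_contra hcn
  push_neg at hcn
  have key : ∑ x : Fin n → ZMod 2, (if ∀ j, x j = 0 then (0 : ZMod 2) else 1)
      = ∑ x : Fin n → ZMod 2, ∑ i : Fin k, g i x :=
    Finset.sum_congr rfl fun x _ => hf x
  rw [Finset.sum_comm] at key
  -- left side is 1
  have hL : ∑ x : Fin n → ZMod 2, (if ∀ j, x j = 0 then (0 : ZMod 2) else 1) = 1 := by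
    have step : ∀ x : Fin n → ZMod 2,
        (if ∀ j, x j = 0 then (0 : ZMod 2) else 1) = 1 + (if x = 0 then 1 else 0) := by
      intro x
      by_cases hx : x = 0
      · subst hx; simp; decide
      · have hne : ¬ ∀ j, x j = 0 := fun hall => hx (funext hall)
        simp [hx, hne]
    rw [Finset.sum_congr rfl fun x _ => step x, Finset.sum_add_distrib,
      Finset.sum_ite_eq' Finset.univ (0 : Fin n → ZMod 2) (fun _ => (1 : ZMod 2))]
    have hcard : ∑ _x : Fin n → ZMod 2, (1 : ZMod 2) = 0 := by
      rw [Finset.sum_const, Finset.card_univ]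
      have : (Fintype.card (Fin n → ZMod 2) : ZMod 2) = 0 := by
        rw [Fintype.card_fun]
        push_cast
        simp [Fintype.card_fin, ZMod.card]
        exact ⟨by decide, by omega⟩
      simpa using this
    simp [hcard]
  -- each inner sum on the right is 0
  have hR : ∀ i : Fin k, ∑ x : Fin n → ZMod 2, g i x = 0 := by
    intro i
    obtain ⟨S, hScard, hS⟩ := hdep i
    have hj : ∃ j : Fin n, j ∉ S := by
      by_contra hall
      push_neg at hall
      have : S = Finset.univ := Finset.eq_univ_iff_forall.mpr hall
      rw [this, Finset.card_univ, Fintype.card_fin] at hScard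
      omega
    obtain ⟨j, hjS⟩ := hj
    apply Finset.sum_ninvolution (fun x => Function.update x j (x j + 1))
    · intro x
      have : g i (Function.update x j (x j + 1)) = g i x := by
        apply hS
        intro j' hj'
        have : j' ≠ j := fun h => hjS (h ▸ hj')
        simp [Function.update_of_ne this]
      rw [this]
      exact CharTwo.add_self_eq_zero _
    · intro x _
      intro hEq
      have := congrFun hEq j
      simp at this
    · intro x; exact Finset.mem_univ _
    · intro x
      funext j'
      by_cases hj' : j' = j
      · subst hj'
        simp only [Function.update_self]
        rw [add_assoc, CharTwo.add_self_eq_zero, add_zero]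
      · simp [Function.update_of_ne hj']
  rw [hL] at key
  simp [hR] at key
end

section
/- Let n ≥ 2 and let f : (Z/2Z)^n → Z/2Z be the function with f(x) = 1 if x is constant (x = (0,...,0) or x = (1,...,1)) and f(x) = 0 otherwise; equivalently, f(x) = 1 iff the word x ∈ {0,1}^n satisfies A_N(x) = 1. Suppose f = g_1 + g_2 + ... + g_k (pointwise sum in Z/2Z) where each g_i : (Z/2Z)^n → Z/2Z depends on at most c of the n coordinates. Then n − 1 ≤ c. (Consequently, {x ∈ {0,1}* : A_N(x) = 1} is not in ⊕SAC⁰.) -/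
/-- If the indicator function of constant words on `n ≥ 2` variables over `ℤ/2ℤ`
(value `1` at `0ⁿ` and `1ⁿ`, i.e. exactly when `A_N(x) = 1`, and `0` elsewhere) is a
pointwise sum of functions each depending on at most `c` coordinates, then `n - 1 ≤ c`.
(Hence `{x ∈ {0,1}* : A_N(x) = 1} ∉ ⊕SAC⁰`.) -/
theorem constant_indicator_not_sum_of_juntas (n : ℕ) (hn : 2 ≤ n) (c k : ℕ)
    (g : Fin k → (Fin n → ZMod 2) → ZMod 2)
    (hdep : ∀ i : Fin k, ∃ S : Finset (Fin n), S.card ≤ c ∧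
      ∀ x y : Fin n → ZMod 2, (∀ j ∈ S, x j = y j) → g i x = g i y)
    (hf : ∀ x : Fin n → ZMod 2,
      (if (∀ j, x j = 0) ∨ (∀ j, x j = 1) then (1 : ZMod 2) else 0) = ∑ i : Fin k, g i x) :
    n - 1 ≤ c := by
  classical
  by_contra hc
  push_neg at hc
  have hcn : c + 1 < n := by omega
  set j₀ : Fin n := ⟨0, by omega⟩ with hj₀
  set Ω : Finset (Fin n → ZMod 2) := Finset.univ.filter (fun x => x j₀ = 0) with hΩ
  -- sum of f over Ω is 1
  have hfsum : ∑ x ∈ Ω, (if (∀ j, x j = 0) ∨ (∀ j, x j = 1) then (1 : ZMod 2) else 0) = 1 := by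
    have hcongr : ∀ x ∈ Ω, (if (∀ j, x j = 0) ∨ (∀ j, x j = 1) then (1 : ZMod 2) else 0)
        = if x = (fun _ => 0) then (1 : ZMod 2) else 0 := by
      intro x hx
      simp only [hΩ, Finset.mem_filter] at hx
      have hiff : ((∀ j, x j = 0) ∨ (∀ j, x j = 1)) ↔ x = (fun _ => 0) := by
        constructor
        · rintro (h | h)
          · funext j; exact h j
          · exact absurd (hx.2.symm.trans (h j₀)) (by decide)
        · intro h; left; intro j; exact congrFun h j
      exact if_congr hiff rfl rfl
    rw [Finset.sum_congr rfl hcongr, Finset.sum_ite_eq' Ω (fun _ => 0) (fun _ => (1 : ZMod 2))]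
    simp [hΩ]
  -- each junta sums to 0 over Ω
  have hg : ∀ i : Fin k, ∑ x ∈ Ω, g i x = 0 := by
    intro i
    obtain ⟨S, hScard, hS⟩ := hdep i
    have hne : ((insert j₀ S)ᶜ : Finset (Fin n)).Nonempty := by
      rw [← Finset.card_pos, Finset.card_compl]
      have h1 : (insert j₀ S).card ≤ c + 1 :=
        le_trans (Finset.card_insert_le _ _) (by omega)
      have : Fintype.card (Fin n) = n := Fintype.card_fin n
      omega
    obtain ⟨t, ht⟩ := hne
    rw [Finset.mem_compl, Finset.mem_insert, not_or] at ht
    obtain ⟨htj, htS⟩ := ht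
    refine Finset.sum_involution (fun x _ => Function.update x t (x t + 1)) ?_ ?_ ?_ ?_
    · intro x hx
      have heq : g i x = g i (Function.update x t (x t + 1)) := by
        apply hS
        intro j hj
        rw [Function.update_of_ne (by rintro rfl; exact htS hj)]
      rw [← heq]
      exact CharTwo.add_self_eq_zero _
    · intro x hx _
      intro h
      have h' : Function.update x t (x t + 1) = x := h
      have h2 := congrFun h' t
      rw [Function.update_self] at h2
      have h10 : (1 : ZMod 2) = 0 :=
        add_left_cancel (a := x t) (by simpa using h2)
      exact (by decide : (1 : ZMod 2) ≠ 0) h10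
    · intro x hx
      simp only [hΩ, Finset.mem_filter, Finset.mem_univ, true_and] at hx ⊢
      rw [Function.update_of_ne (Ne.symm htj)]
      exact hx
    · intro x hx
      show Function.update (Function.update x t (x t + 1)) t
          (Function.update x t (x t + 1) t + 1) = x
      rw [Function.update_self, Function.update_idem, add_assoc,
          CharTwo.add_self_eq_zero, add_zero, Function.update_eq_self]
  -- combine
  have h10 : (1 : ZMod 2) = 0 := by
    calc (1 : ZMod 2)
        = ∑ x ∈ Ω, (if (∀ j, x j = 0) ∨ (∀ j, x j = 1) then (1 : ZMod 2) else 0) := hfsum.symm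
      _ = ∑ x ∈ Ω, ∑ i : Fin k, g i x := Finset.sum_congr rfl (fun x _ => hf x)
      _ = ∑ i : Fin k, ∑ x ∈ Ω, g i x := Finset.sum_comm
      _ = 0 := by simp [hg]
  exact (by decide : (1 : ZMod 2) ≠ 0) h10
end

section
/- Let Σ be a finite alphabet and let x ∈ Σ* be any word of length n. Then A_N(x) ≤ ⌊n/2⌋ + 1. -/
namespace HydeAux

variable {σ : Type}

/-- Hyde's machine for a word `y` of odd length `2k+1`. -/
def oddM (y : List σ) (k : ℕ) : NFAc σ (k+1) where
  start := 0
  accept p := (p : ℕ) = 0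
  step p a q :=
    ((q:ℕ) = (p:ℕ)+1 ∧ (p:ℕ) < k ∧ y[(p:ℕ)]? = some a) ∨
    ((p:ℕ) = k ∧ (q:ℕ) = k ∧ y[k]? = some a) ∨
    ((p:ℕ) = (q:ℕ)+1 ∧ y[2*k+1-(p:ℕ)]? = some a)

lemma lemA (y : List σ) (k : ℕ) :
    ∀ (w : List σ) (p : Fin (k+1)) (l), (oddM y k).RunFrom p w l → (p:ℕ) ≤ w.length := by
  intro w
  induction w with
  | nil =>
    intro p l h
    obtain ⟨-, hacc⟩ := h
    have hacc' : (p:ℕ) = 0 := hacc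
    simp only [List.length_nil]
    omega
  | cons a t ih =>
    intro p l h
    obtain ⟨q, l', hstep, hrun, -⟩ := h
    have hq := ih q l' hrun
    rcases hstep with ⟨h1, h2, -⟩ | ⟨h1, h2, -⟩ | ⟨h1, -⟩ <;>
      simp only [List.length_cons] <;> omega

lemma lemPar (y : List σ) (k : ℕ) :
    ∀ (w : List σ) (p : Fin (k+1)) (l), (oddM y k).RunFrom p w l →
      w.length % 2 = (p:ℕ) % 2 ∨ 2*k+1-(p:ℕ) ≤ w.length := by
  intro w
  induction w with
  | nil =>
    intro p l h
    obtain ⟨-, hacc⟩ := h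
    have hacc' : (p:ℕ) = 0 := hacc
    simp only [List.length_nil]
    omega
  | cons a t ih =>
    intro p l h
    obtain ⟨q, lt, hstep, hrun, -⟩ := h
    have hA := lemA y k t q lt hrun
    have hP := ih q lt hrun
    simp only [List.length_cons]
    rcases hstep with ⟨h1, h2, -⟩ | ⟨h1, h2, -⟩ | ⟨h1, -⟩ <;>
      rcases hP with hP | hP <;> omega

lemma lemDesc (y : List σ) (k : ℕ) :
    ∀ (w w' : List σ) (p : Fin (k+1)) (l l'), (oddM y k).RunFrom p w l →
      (oddM y k).RunFrom p w' l' → w.length = (p:ℕ) → w'.length = (p:ℕ) →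
      w = w' ∧ l = l' := by
  intro w
  induction w with
  | nil =>
    intro w' p l l' h h' hw hw'
    have hnil : w' = [] := List.eq_nil_of_length_eq_zero (by simp at hw; omega)
    subst hnil
    obtain ⟨rfl, -⟩ := h
    obtain ⟨rfl, -⟩ := h'
    exact ⟨rfl, rfl⟩
  | cons a t ih =>
    intro w' p l l' h h' hw hw'
    rcases w' with - | ⟨a', t'⟩
    · simp at hw hw'; omega
    obtain ⟨q, lt, hstep, hrun, rfl⟩ := h
    obtain ⟨q', lt', hstep', hrun', rfl⟩ := h'
    have hA := lemA y k t q lt hrun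
    have hA' := lemA y k t' q' lt' hrun'
    simp only [List.length_cons] at hw hw'
    rcases hstep with ⟨h1, h2, h3⟩ | ⟨h1, h2, h3⟩ | ⟨h1, h3⟩
    · omega
    · omega
    rcases hstep' with ⟨g1, g2, g3⟩ | ⟨g1, g2, g3⟩ | ⟨g1, g3⟩
    · omega
    · omega
    have hqq : q = q' := Fin.ext (by omega)
    subst hqq
    have haa : a = a' := Option.some.inj (h3.symm.trans g3)
    obtain ⟨ht, hl⟩ := ih t' q lt lt' hrun hrun' (by omega) (by omega)
    subst haa; subst ht; subst hl
    exact ⟨rfl, rfl⟩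

lemma lemMain (y : List σ) (k : ℕ) :
    ∀ (w w' : List σ) (p : Fin (k+1)) (l l'), (oddM y k).RunFrom p w l →
      (oddM y k).RunFrom p w' l' → w.length = 2*k+1-(p:ℕ) → w'.length = w.length →
      w = w' ∧ l = l' := by
  intro w
  induction w with
  | nil =>
    intro w' p l l' h h' hw hw'
    have := p.isLt
    simp only [List.length_nil] at hw
    omega
  | cons a t ih =>
    intro w' p l l' h h' hw hw'
    have hpk := p.isLt
    rcases w' with - | ⟨a', t'⟩
    · simp at hw'
    obtain ⟨q, lt, hstep, hrun, rfl⟩ := h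
    obtain ⟨q', lt', hstep', hrun', rfl⟩ := h'
    simp only [List.length_cons] at hw hw'
    rcases hstep with ⟨h1, h2, h3⟩ | ⟨h1, h2, h3⟩ | ⟨h1, h3⟩
    · -- run 1 goes up
      rcases hstep' with ⟨g1, g2, g3⟩ | ⟨g1, g2, g3⟩ | ⟨g1, g3⟩
      · have hqq : q = q' := Fin.ext (by omega)
        subst hqq
        have haa : a = a' := Option.some.inj (h3.symm.trans g3)
        obtain ⟨ht, hl⟩ := ih t' q lt lt' hrun hrun' (by omega) (by omega)
        subst haa; subst ht; subst hl
        exact ⟨rfl, rfl⟩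
      · omega
      · rcases lemPar y k t' q' lt' hrun' with hP | hP <;> omega
    · -- run 1 uses the loop at the top
      rcases hstep' with ⟨g1, g2, g3⟩ | ⟨g1, g2, g3⟩ | ⟨g1, g3⟩
      · omega
      · have hqq : q = q' := Fin.ext (by omega)
        subst hqq
        have haa : a = a' := Option.some.inj (h3.symm.trans g3)
        obtain ⟨ht, hl⟩ := lemDesc y k t t' q lt lt' hrun hrun' (by omega) (by omega)
        subst haa; subst ht; subst hl
        exact ⟨rfl, rfl⟩
      · rcases lemPar y k t' q' lt' hrun' with hP | hP <;> omega
    · -- run 1 goes down: impossible by parity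
      rcases lemPar y k t q lt hrun with hP | hP <;> omega

lemma exDesc (y : List σ) (k : ℕ) (hy : y.length = 2*k+1) :
    ∀ (j : ℕ), j ≤ k → ∀ (p : Fin (k+1)), (p:ℕ) = j →
      ∃ l, (oddM y k).RunFrom p (y.drop (2*k+1-j)) l := by
  intro j
  induction j with
  | zero =>
    intro hj p hp
    refine ⟨[p], ?_⟩
    rw [show 2*k+1-0 = y.length from by omega, List.drop_length]
    exact ⟨rfl, hp⟩
  | succ j ih =>
    intro hj p hp
    have hlt : 2*k+1-(j+1) < y.length := by omega
    obtain ⟨l', hl'⟩ := ih (by omega) ⟨j, by omega⟩ rfl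
    refine ⟨p :: l', ?_⟩
    rw [List.drop_eq_getElem_cons hlt, show 2*k+1-(j+1)+1 = 2*k+1-j from by omega]
    refine ⟨⟨j, by omega⟩, l', Or.inr (Or.inr ⟨by simp only [Fin.val_mk]; omega, ?_⟩), hl', rfl⟩
    rw [hp]
    exact List.getElem?_eq_getElem hlt

lemma exMain (y : List σ) (k : ℕ) (hy : y.length = 2*k+1) :
    ∀ (j : ℕ), j ≤ k → ∀ (p : Fin (k+1)), (p:ℕ) = k - j →
      ∃ l, (oddM y k).RunFrom p (y.drop (k-j)) l := by
  intro j
  induction j with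
  | zero =>
    intro hj p hp
    simp only [Nat.sub_zero] at hp ⊢
    have hlt : k < y.length := by omega
    obtain ⟨l', hl'⟩ := exDesc y k hy k le_rfl p hp
    rw [show 2*k+1-k = k+1 from by omega] at hl'
    refine ⟨p :: l', ?_⟩
    rw [List.drop_eq_getElem_cons hlt]
    exact ⟨p, l', Or.inr (Or.inl ⟨hp, hp, List.getElem?_eq_getElem hlt⟩),
      hl', rfl⟩
  | succ j ih =>
    intro hj p hp
    have hlt : k-(j+1) < y.length := by omega
    obtain ⟨l', hl'⟩ := ih (by omega) ⟨k-j, by omega⟩ rfl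
    refine ⟨p :: l', ?_⟩
    rw [List.drop_eq_getElem_cons hlt, show k-(j+1)+1 = k-j from by omega]
    refine ⟨⟨k-j, by omega⟩, l',
      Or.inl ⟨by simp only [Fin.val_mk]; omega, by omega, ?_⟩, hl', rfl⟩
    rw [hp]
    exact List.getElem?_eq_getElem hlt

lemma oddUA (y : List σ) (k : ℕ) (hy : y.length = 2*k+1) :
    (oddM y k).UniquelyAccepts y := by
  constructor
  · obtain ⟨l, hl⟩ := exMain y k hy k le_rfl 0 (by simp)
    rw [Nat.sub_self, List.drop_zero] at hl
    exact ⟨l, hl⟩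
  · intro w l w' l' hw hw' h h'
    have h0 : (((oddM y k).start : Fin (k+1)) : ℕ) = 0 := rfl
    exact lemMain y k w w' _ l l' h h' (by rw [h0]; omega) (by omega)

/-- Prepend a fresh start state reading `a₀` to a machine. -/
def liftM {m : ℕ} (M : NFAc σ m) (a₀ : σ) : NFAc σ (m+1) where
  start := 0
  accept p := ∃ q : Fin m, p = q.succ ∧ M.accept q
  step p a q := (p = 0 ∧ a = a₀ ∧ q = M.start.succ) ∨
    (∃ p' q' : Fin m, p = p'.succ ∧ q = q'.succ ∧ M.step p' a q')

lemma lift_run_fwd {m : ℕ} (M : NFAc σ m) (a₀ : σ) :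
    ∀ (w : List σ) (p : Fin m) (l), (liftM M a₀).RunFrom p.succ w l →
      ∃ l0, M.RunFrom p w l0 ∧ l = l0.map Fin.succ := by
  intro w
  induction w with
  | nil =>
    intro p l h
    obtain ⟨rfl, q, hq, hacc⟩ := h
    have hpq : p = q := Fin.succ_injective _ hq
    subst hpq
    exact ⟨[p], ⟨rfl, hacc⟩, rfl⟩
  | cons a t ih =>
    intro p l h
    obtain ⟨q, l', hstep, hrun, rfl⟩ := h
    rcases hstep with ⟨h0, -, -⟩ | ⟨p', q', hp, hq, hs⟩
    · exact absurd h0 (Fin.succ_ne_zero p)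
    · have hpp : p = p' := Fin.succ_injective _ hp
      subst hpp; subst hq
      obtain ⟨l0, hr0, rfl⟩ := ih q' l' hrun
      exact ⟨p :: l0, ⟨q', l0, hs, hr0, rfl⟩, rfl⟩

lemma lift_run_bwd {m : ℕ} (M : NFAc σ m) (a₀ : σ) :
    ∀ (w : List σ) (p : Fin m) (l0), M.RunFrom p w l0 →
      (liftM M a₀).RunFrom p.succ w (l0.map Fin.succ) := by
  intro w
  induction w with
  | nil =>
    intro p l0 h
    obtain ⟨rfl, hacc⟩ := h
    exact ⟨rfl, p, rfl, hacc⟩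
  | cons a t ih =>
    intro p l0 h
    obtain ⟨q, l0', hs, hr, rfl⟩ := h
    exact ⟨q.succ, l0'.map Fin.succ, Or.inr ⟨p, q, rfl, rfl, hs⟩, ih q l0' hr, rfl⟩

lemma liftUA {m : ℕ} (M : NFAc σ m) (a₀ : σ) (y : List σ) (h : M.UniquelyAccepts y) :
    (liftM M a₀).UniquelyAccepts (a₀ :: y) := by
  obtain ⟨⟨l0, hl0⟩, huniq⟩ := h
  constructor
  · exact ⟨(liftM M a₀).start :: (l0.map Fin.succ), M.start.succ, l0.map Fin.succ,
      Or.inl ⟨rfl, rfl, rfl⟩, lift_run_bwd M a₀ y M.start l0 hl0, rfl⟩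
  · intro w l w' l' hw hw' hr hr'
    rcases w with - | ⟨b, t⟩
    · simp at hw
    rcases w' with - | ⟨b', t'⟩
    · simp at hw'
    obtain ⟨q, l1, hstep, hrun, rfl⟩ := hr
    obtain ⟨q', l1', hstep', hrun', rfl⟩ := hr'
    rcases hstep with ⟨-, hb, hq⟩ | ⟨p', q'', hp, -, -⟩
    swap
    · exact absurd hp.symm (Fin.succ_ne_zero p')
    rcases hstep' with ⟨-, hb', hq'⟩ | ⟨p', q'', hp, -, -⟩
    swap
    · exact absurd hp.symm (Fin.succ_ne_zero p')
    subst hq; subst hq'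
    obtain ⟨lt, hrt, rfl⟩ := lift_run_fwd M a₀ t M.start l1 hrun
    obtain ⟨lt', hrt', rfl⟩ := lift_run_fwd M a₀ t' M.start l1' hrun'
    simp only [List.length_cons] at hw hw'
    obtain ⟨htt, hll⟩ := huniq t lt t' lt' (by omega) (by omega) hrt hrt'
    subst htt; subst hll
    exact ⟨by rw [hb, hb'], rfl⟩

/-- The trivial one-state machine for the empty word. -/
def nilM : NFAc σ 1 where
  start := 0
  accept _ := True
  step _ _ _ := False

lemma nilUA : (nilM (σ := σ)).UniquelyAccepts [] := by
  refine ⟨⟨[0], rfl, trivial⟩, ?_⟩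
  intro w l w' l' hw hw' h h'
  rcases w with - | ⟨b, t⟩
  swap
  · simp at hw
  rcases w' with - | ⟨b', t'⟩
  swap
  · simp at hw'
  obtain ⟨rfl, -⟩ := h
  obtain ⟨rfl, -⟩ := h'
  exact ⟨rfl, rfl⟩

lemma existsM (x : List σ) : ∃ M : NFAc σ (x.length/2 + 1), M.UniquelyAccepts x := by
  rcases Nat.even_or_odd x.length with he | ho
  · rcases x with - | ⟨a, y⟩
    · rw [show (List.nil (α := σ)).length/2+1 = 1 from by simp]
      exact ⟨nilM, nilUA⟩
    · obtain ⟨r, hr⟩ := he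
      simp only [List.length_cons] at hr
      have hr1 : 1 ≤ r := by omega
      have hylen : y.length = 2*(r-1)+1 := by omega
      rw [show (a::y).length/2+1 = (r-1)+1+1 from by simp only [List.length_cons]; omega]
      exact ⟨liftM (oddM y (r-1)) a, liftUA _ a y (oddUA y (r-1) hylen)⟩
  · obtain ⟨j, hj⟩ := ho
    rw [show x.length/2+1 = j+1 from by omega]
    exact ⟨oddM x j, oddUA x j hj⟩

end HydeAux

/-- Hyde's theorem: for any word `x` of length `n` over a finite alphabet,
`A_N(x) ≤ ⌊n/2⌋ + 1`. -/
theorem AN_le_halfLength_add_one {σ : Type} [Fintype σ] (x : List σ) :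
    AN x ≤ x.length / 2 + 1 := by
  obtain ⟨M, hM⟩ := HydeAux.existsM x
  exact Nat.sInf_le ⟨M, hM⟩
end

section
/- (Interchange lemma) Let Σ be a finite alphabet and let L ⊆ Σ* be a context-free language. Then there is an integer c > 0 such that for all integers n ≥ 2, all subsets R ⊆ L ∩ Σ^n, and all integers m with 2 ≤ m ≤ n, there exists a subset Z = {z_1,...,z_k} ⊆ R with k ≥ |R|/(c(n+1)²) and decompositions z_i = w_i x_i y_i for 1 ≤ i ≤ k such that for all 1 ≤ i, j ≤ k: (a) |w_i| = |w_j|, (b) |y_i| = |y_j|, (c) m/2 < |x_i| = |x_j| ≤ m, and (d) w_i x_j y_i ∈ L. -/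
/-!
Follow a derivation of a word `z` with `m < |z|` from the root downwards: as long as some symbol
of the current right-hand side derives more than `m` letters, descend into it. When every symbol
derives at most `m` letters, a run `ch` of consecutive symbols of that right-hand side derives a
subword `x` with `m/2 < |x| ≤ m`, and the start symbol derives `w ch y` with `z = w x y`.
Two words whose windows share the chunk `ch` can exchange their subwords `x`. There are finitely
many chunks, say `c`, and fewer than `n + 1` values for each of `|w|` and `|x|`, so some class
with the same triple `(ch, |w|, |x|)` contains at least `|R| / (c (n + 1)²)` words of `R`.
-/

lemma ContextFreeRule.Rewrites.append_cases {T N : Type*} {r : ContextFreeRule T N} :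
    ∀ {u v t : List (Symbol T N)}, r.Rewrites (u ++ v) t →
      (∃ u', r.Rewrites u u' ∧ t = u' ++ v) ∨ (∃ v', r.Rewrites v v' ∧ t = u ++ v')
  | [], _, t, h => .inr ⟨t, h, rfl⟩
  | _ :: u, _, _, .head _ => .inl ⟨_, .head u, by simp⟩
  | a :: _, _, _, .cons _ h => (append_cases h).imp
      (fun ⟨u', h', e⟩ => ⟨a :: u', h'.cons a, by simp [e]⟩)
      (fun ⟨v', h', e⟩ => ⟨v', h', by simp [e]⟩)

theorem List.exists_eq_append_append_half_lt_sum {α : Type*} (f : α → ℕ) {m : ℕ} :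
    ∀ l : List α, (∀ a ∈ l, f a ≤ m) → m < (l.map f).sum →
      ∃ l₁ l₂ l₃, l = l₁ ++ l₂ ++ l₃ ∧ m < 2 * (l₂.map f).sum ∧ (l₂.map f).sum ≤ m
  | [], _, h => by simp at h
  | a :: l, hle, hsum => by
    by_cases hl : m < (l.map f).sum
    · obtain ⟨l₁, l₂, l₃, rfl, h⟩ :=
        exists_eq_append_append_half_lt_sum f l (fun b hb => hle b (by simp [hb])) hl
      exact ⟨a :: l₁, l₂, l₃, rfl, h⟩
    · by_cases ha : m < 2 * f a
      · exact ⟨[], [a], l, rfl, by simpa using ha, by simpa using hle a (by simp)⟩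
      · simp only [List.map_cons, List.sum_cons] at hsum
        exact ⟨[a], l, [], by simp, by omega, by omega⟩

namespace ContextFreeGrammar

variable {T : Type*} {g : ContextFreeGrammar T}

lemma Derives.append {u₁ v₁ u₂ v₂ : List (Symbol T g.NT)} (h₁ : g.Derives u₁ v₁)
    (h₂ : g.Derives u₂ v₂) : g.Derives (u₁ ++ u₂) (v₁ ++ v₂) :=
  (h₁.append_right u₂).trans (h₂.append_left v₁)

lemma Derives.trans_middle {u ch : List (Symbol T g.NT)} {w x y : List T}
    (hu : g.Derives u (w.map .terminal ++ ch ++ y.map .terminal))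
    (hch : g.Derives ch (x.map .terminal)) : g.Derives u ((w ++ x ++ y).map .terminal) := by
  simpa only [List.map_append] using
    hu.trans ((hch.append_left (w.map .terminal)).append_right (y.map .terminal))

lemma not_produces_map_terminal (z : List T) (v : List (Symbol T g.NT)) :
    ¬ g.Produces (z.map .terminal) v := fun ⟨r, _, hr⟩ => by
  simpa using hr.nonterminal_input_mem

lemma produces_singleton_nonterminal {B : g.NT} {v : List (Symbol T g.NT)}
    (h : g.Produces [.nonterminal B] v) : ∃ r ∈ g.rules, r.input = B ∧ r.output = v := by
  obtain ⟨r, hr, hrw⟩ := h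
  cases hrw with
  | head => exact ⟨r, hr, rfl, (List.append_nil _).symm⟩
  | cons _ hrw => cases hrw

inductive DerivesIn (g : ContextFreeGrammar T) :
    ℕ → List (Symbol T g.NT) → List (Symbol T g.NT) → Prop
  | refl (u : List (Symbol T g.NT)) : DerivesIn g 0 u u
  | head {n : ℕ} {u v w : List (Symbol T g.NT)} :
      g.Produces u v → DerivesIn g n v w → DerivesIn g (n + 1) u w

namespace DerivesIn

variable {n : ℕ} {u v w : List (Symbol T g.NT)}

lemma zero_iff : g.DerivesIn 0 u v ↔ u = v :=
  ⟨fun | .refl _ => rfl, fun h => h ▸ .refl u⟩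

lemma succ_iff : g.DerivesIn (n + 1) u w ↔ ∃ v, g.Produces u v ∧ g.DerivesIn n v w :=
  ⟨fun | .head huv hvw => ⟨_, huv, hvw⟩, fun ⟨_, huv, hvw⟩ => .head huv hvw⟩

lemma derives (h : g.DerivesIn n u v) : g.Derives u v := by
  induction h with
  | refl => exact Derives.refl _
  | head huv _ ih => exact huv.trans_derives ih

lemma tail (h : g.DerivesIn n u v) (hvw : g.Produces v w) : g.DerivesIn (n + 1) u w := by
  induction h with
  | refl => exact .head hvw (.refl _)
  | head huv _ ih => exact .head huv (ih hvw)

lemma eq_of_map_terminal {z : List T} (h : g.DerivesIn n (z.map .terminal) v) :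
    v = z.map .terminal := by
  cases h with
  | refl => rfl
  | head hp => exact absurd hp (not_produces_map_terminal z _)

lemma append_split : ∀ {n : ℕ} {u v w : List (Symbol T g.NT)}, g.DerivesIn n (u ++ v) w →
    ∃ w₁ w₂ n₁ n₂, w = w₁ ++ w₂ ∧ n₁ + n₂ = n ∧ g.DerivesIn n₁ u w₁ ∧ g.DerivesIn n₂ v w₂
  | 0, u, v, _, .refl _ => ⟨u, v, 0, 0, rfl, rfl, .refl u, .refl v⟩
  | n + 1, u, v, _, .head ⟨r, hr, hrw⟩ hd => by
    rcases hrw.append_cases with ⟨u', hu, rfl⟩ | ⟨v', hv, rfl⟩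
    · obtain ⟨w₁, w₂, n₁, n₂, rfl, rfl, h₁, h₂⟩ := append_split hd
      exact ⟨w₁, w₂, n₁ + 1, n₂, rfl, by omega, .head ⟨r, hr, hu⟩ h₁, h₂⟩
    · obtain ⟨w₁, w₂, n₁, n₂, rfl, rfl, h₁, h₂⟩ := append_split hd
      exact ⟨w₁, w₂, n₁, n₂ + 1, rfl, by omega, h₁, .head ⟨r, hr, hv⟩ h₂⟩

lemma exists_symbolwise {n : ℕ} : ∀ {γ : List (Symbol T g.NT)} {z : List T},
    g.DerivesIn n γ (z.map .terminal) → ∃ ps : List (Symbol T g.NT × List T),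
      ps.map Prod.fst = γ ∧ (ps.map Prod.snd).flatten = z ∧
      ∀ p ∈ ps, ∃ k ≤ n, g.DerivesIn k [p.1] (p.2.map .terminal)
  | [], z, h => by
    have hz : z.map Symbol.terminal = [] := eq_of_map_terminal (z := []) h
    exact ⟨[], rfl, (List.map_eq_nil_iff.mp hz).symm, by simp⟩
  | s :: γ, z, h => by
    obtain ⟨w₁, w₂, n₁, n₂, hw, rfl, h₁, h₂⟩ := append_split (u := [s]) h
    obtain ⟨z₁, z₂, rfl, rfl, rfl⟩ := List.map_eq_append_iff.mp hw
    obtain ⟨ps, rfl, rfl, hps⟩ := exists_symbolwise h₂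
    refine ⟨(s, z₁) :: ps, rfl, rfl, ?_⟩
    rintro p (_ | ⟨_, hp⟩)
    · exact ⟨n₁, by omega, h₁⟩
    · obtain ⟨k, hk, hd⟩ := hps p hp
      exact ⟨k, by omega, hd⟩

end DerivesIn

lemma derives_flatten (ps : List (Symbol T g.NT × List T))
    (h : ∀ p ∈ ps, g.Derives [p.1] (p.2.map .terminal)) :
    g.Derives (ps.map Prod.fst) ((ps.map Prod.snd).flatten.map .terminal) := by
  induction ps with
  | nil => exact Derives.refl _
  | cons p ps ih =>
    simpa using (h p (by simp)).append (ih fun q hq => h q (by simp [hq]))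

lemma derives_flatten_append_append (ps₁ ps₂ ps₃ : List (Symbol T g.NT × List T))
    {v : List (Symbol T g.NT)} (h : ∀ p ∈ ps₁ ++ ps₃, g.Derives [p.1] (p.2.map .terminal))
    (h₂ : g.Derives (ps₂.map Prod.fst) v) :
    g.Derives ((ps₁ ++ ps₂ ++ ps₃).map Prod.fst)
      ((ps₁.map Prod.snd).flatten.map .terminal ++ v ++
        (ps₃.map Prod.snd).flatten.map .terminal) := by
  rw [List.map_append, List.map_append]
  exact ((derives_flatten ps₁ fun p hp => h p (by simp [hp])).append h₂).append
    (derives_flatten ps₃ fun p hp => h p (by simp [hp]))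

lemma Derives.exists_derivesIn {u v : List (Symbol T g.NT)} (h : g.Derives u v) :
    ∃ n, g.DerivesIn n u v := by
  induction h with
  | refl => exact ⟨0, .refl _⟩
  | tail _ hp ih => obtain ⟨n, hn⟩ := ih; exact ⟨n + 1, hn.tail hp⟩

open Classical in
/-- Sublists rather than infixes of right-hand sides: only the finiteness matters, since the
number of chunks is the constant of the interchange lemma. -/
noncomputable def ruleChunks (g : ContextFreeGrammar T) : Finset (List (Symbol T g.NT)) :=
  g.rules.biUnion fun r => r.output.sublists.toFinset

open Classical in
noncomputable def chunks (g : ContextFreeGrammar T) : Finset (List (Symbol T g.NT)) :=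
  insert [.nonterminal g.initial] g.ruleChunks

lemma mem_ruleChunks {r : ContextFreeRule T g.NT} (hr : r ∈ g.rules)
    {ch : List (Symbol T g.NT)} (h : ch.Sublist r.output) : ch ∈ g.ruleChunks := by
  classical
  simp only [ruleChunks, Finset.mem_biUnion, List.mem_toFinset, List.mem_sublists]
  exact ⟨r, hr, h⟩

lemma initial_mem_chunks : [.nonterminal g.initial] ∈ g.chunks := by
  classical
  exact Finset.mem_insert_self _ _

lemma mem_chunks_of_mem_ruleChunks {ch : List (Symbol T g.NT)} (h : ch ∈ g.ruleChunks) :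
    ch ∈ g.chunks := by
  classical
  exact Finset.mem_insert_of_mem h

theorem DerivesIn.exists_ruleChunk_window {m : ℕ} (hm : 0 < m) {n : ℕ} {B : g.NT} {z : List T}
    (h : g.DerivesIn n [.nonterminal B] (z.map .terminal)) (hmz : m < z.length) :
    ∃ ch ∈ g.ruleChunks, ∃ w x y : List T,
      z = w ++ x ++ y ∧ m < 2 * x.length ∧ x.length ≤ m ∧
      g.Derives [.nonterminal B] (w.map .terminal ++ ch ++ y.map .terminal) ∧
      g.Derives ch (x.map .terminal) := by
  induction n using Nat.strong_induction_on generalizing B z with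
  | _ n ih =>
  obtain _ | n := n
  · have : Symbol.nonterminal B ∈ z.map .terminal := by rw [← zero_iff.mp h]; simp
    simp at this
  obtain ⟨v, hp, hd⟩ := succ_iff.mp h
  obtain ⟨r, hr, rfl, rfl⟩ := produces_singleton_nonterminal hp
  obtain ⟨ps, hγ, rfl, hps⟩ := hd.exists_symbolwise
  have hder : ∀ p ∈ ps, g.Derives [p.1] (p.2.map .terminal) := fun p hp =>
    (hps p hp).elim fun _ h => h.2.derives
  have hrule : g.Derives [.nonterminal r.input] (ps.map Prod.fst) :=
    Produces.single ⟨r, hr, hγ ▸ ContextFreeRule.Rewrites.input_output⟩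
  by_cases hbig : ∃ p ∈ ps, m < p.2.length
  · obtain ⟨⟨s, x'⟩, hp, hlong⟩ := hbig
    obtain ⟨ps₁, ps₃, rfl⟩ : ∃ ps₁ ps₃, ps = ps₁ ++ [(s, x')] ++ ps₃ := by
      simpa using List.append_of_mem hp
    obtain ⟨k, hk, hdk⟩ := hps _ hp
    obtain ⟨C, rfl⟩ : ∃ C, s = .nonterminal C := by
      cases s with
      | terminal t =>
        have := congrArg List.length (eq_of_map_terminal (z := [t]) hdk)
        simp only [List.length_map, List.length_singleton] at this hlong
        omega
      | nonterminal C => exact ⟨C, rfl⟩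
    obtain ⟨ch, hch, w, x, y, rfl, hx, hxm, hctx, hchx⟩ := ih k (by omega) hdk hlong
    refine ⟨ch, hch, (ps₁.map Prod.snd).flatten ++ w, x, y ++ (ps₃.map Prod.snd).flatten,
      by simp, hx, hxm, ?_, hchx⟩
    simpa using hrule.trans (derives_flatten_append_append ps₁ [(.nonterminal C, w ++ x ++ y)]
      ps₃ (fun p hp => hder p (by simp at hp ⊢; tauto)) hctx)
  · push Not at hbig
    obtain ⟨ps₁, ps₂, ps₃, rfl, hx, hxm⟩ :=
      List.exists_eq_append_append_half_lt_sum (List.length ∘ Prod.snd) ps hbig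
        (by simpa [List.length_flatten] using hmz)
    refine ⟨ps₂.map Prod.fst, mem_ruleChunks hr ?_, (ps₁.map Prod.snd).flatten,
      (ps₂.map Prod.snd).flatten, (ps₃.map Prod.snd).flatten, by simp, ?_, ?_, ?_,
      derives_flatten ps₂ fun p hp => hder p (by simp [hp])⟩
    · rw [← hγ, List.map_append, List.map_append]
      exact (List.infix_append _ _ _).sublist
    · simpa [List.length_flatten] using hx
    · simpa [List.length_flatten] using hxm
    · exact hrule.trans (derives_flatten_append_append ps₁ ps₂ ps₃
        (fun p hp => hder p (by simp at hp ⊢; tauto)) (Derives.refl _))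

theorem exists_chunk_window {m : ℕ} {z : List T} (hz : z ∈ g.language) (hm : 0 < m)
    (hmz : m ≤ z.length) : ∃ ch ∈ g.chunks, ∃ w x y : List T,
      z = w ++ x ++ y ∧ m < 2 * x.length ∧ x.length ≤ m ∧
      g.Derives [.nonterminal g.initial] (w.map .terminal ++ ch ++ y.map .terminal) ∧
      g.Derives ch (x.map .terminal) := by
  rw [mem_language_iff] at hz
  rcases hmz.eq_or_lt with rfl | hlt
  · exact ⟨_, initial_mem_chunks, [], z, [], by simp, by omega, le_rfl,
      by simpa using Derives.refl _, hz⟩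
  · obtain ⟨n, hn⟩ := hz.exists_derivesIn
    obtain ⟨ch, hch, h⟩ := hn.exists_ruleChunk_window hm hlt
    exact ⟨ch, mem_chunks_of_mem_ruleChunks hch, h⟩

theorem exists_large_subset_common_window (R : Finset (List T)) {n m : ℕ}
    (hR : ∀ z ∈ R, z ∈ g.language ∧ z.length = n) (hm : 0 < m) (hmn : m ≤ n) :
    ∃ F ⊆ R, (R.card : ℚ) / (g.chunks.card * (n + 1) ^ 2) ≤ F.card ∧
      ∃ ch i j k, ∀ z ∈ F, ∃ w x y : List T, z = w ++ x ++ y ∧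
        w.length = i ∧ x.length = j ∧ y.length = k ∧ m < 2 * j ∧ j ≤ m ∧
        g.Derives [.nonterminal g.initial] (w.map .terminal ++ ch ++ y.map .terminal) ∧
        g.Derives ch (x.map .terminal) := by
  classical
  choose! ch hch w x y hwin using fun z hz =>
    exists_chunk_window (hR z hz).1 hm ((hR z hz).2 ▸ hmn)
  have hlen : ∀ z ∈ R, (w z).length + (x z).length + (y z).length = n := fun z hz => by
    have := congrArg List.length (hwin z hz).1
    simp only [List.length_append, (hR z hz).2] at this
    omega
  set t := g.chunks ×ˢ (Finset.range (n + 1) ×ˢ Finset.range (n + 1))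
  have hmaps : ∀ z ∈ R, (ch z, (w z).length, (x z).length) ∈ t := fun z hz => by
    simp only [t, Finset.mem_product, Finset.mem_range]
    exact ⟨hch z hz, by linarith [hlen z hz], by linarith [hlen z hz]⟩
  have ht : (t.card : ℚ) = g.chunks.card * (n + 1) ^ 2 := by
    simp only [t, Finset.card_product, Finset.card_range]
    push_cast
    ring
  have htne : t.Nonempty := ⟨([.nonterminal g.initial], 0, 0), by simp [t, initial_mem_chunks]⟩
  obtain ⟨⟨c, i, j⟩, -, hF⟩ := Finset.exists_le_card_fiber_of_nsmul_le_card_of_maps_to hmaps htne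
    (b := (R.card : ℚ) / t.card)
    (by rw [nsmul_eq_mul, mul_div_cancel₀ _ (by exact_mod_cast htne.card_pos.ne')])
  refine ⟨_, Finset.filter_subset _ R, ht ▸ hF, c, i, j, n - i - j, fun z hz => ?_⟩
  obtain ⟨hzR, hz⟩ := Finset.mem_filter.mp hz
  simp only [Prod.mk.injEq] at hz
  obtain ⟨hzw, hx, hxm, hctx, hchx⟩ := hwin z hzR
  obtain ⟨rfl, rfl, rfl⟩ := hz
  exact ⟨w z, x z, y z, hzw, rfl, rfl, by have := hlen z hzR; omega, hx, hxm, hctx, hchx⟩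

end ContextFreeGrammar

open ContextFreeGrammar in
theorem interchange_lemma_general {σ : Type} (L : Language σ)
    (hL : L.IsContextFree) :
    ∃ c : ℕ, 0 < c ∧ ∀ n : ℕ, 2 ≤ n → ∀ R : Finset (List σ),
      (∀ z ∈ R, z ∈ L ∧ z.length = n) → ∀ m : ℕ, 2 ≤ m → m ≤ n →
      ∃ (k : ℕ) (z w x y : Fin k → List σ),
        (R.card : ℚ) / ((c : ℚ) * ((n : ℚ) + 1) ^ 2) ≤ (k : ℚ) ∧
        Function.Injective z ∧
        (∀ i, z i ∈ R) ∧
        (∀ i, z i = w i ++ x i ++ y i) ∧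
        (∀ i j, (w i).length = (w j).length) ∧
        (∀ i j, (y i).length = (y j).length) ∧
        (∀ i j, (x i).length = (x j).length) ∧
        (∀ i, m < 2 * (x i).length ∧ (x i).length ≤ m) ∧
        (∀ i j, w i ++ x j ++ y i ∈ L) := by
  obtain ⟨g, rfl⟩ := hL
  refine ⟨g.chunks.card, Finset.card_pos.mpr ⟨_, initial_mem_chunks⟩,
    fun n _ R hR m hm hmn => ?_⟩
  obtain ⟨F, hFR, hcard, ch, i, j, l, hF⟩ :=
    exists_large_subset_common_window R hR (by omega) hmn
  choose! w x y hz hw hx hy hxm hmx hctx hchx using hF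
  let e := F.equivFin.symm
  refine ⟨F.card, fun a => e a, fun a => w (e a), fun a => x (e a), fun a => y (e a), hcard,
    Subtype.val_injective.comp e.injective, fun a => hFR (e a).2, fun a => hz _ (e a).2,
    ?_, ?_, ?_, ?_, ?_⟩
  · intro a b; rw [hw _ (e a).2, hw _ (e b).2]
  · intro a b; rw [hy _ (e a).2, hy _ (e b).2]
  · intro a b; rw [hx _ (e a).2, hx _ (e b).2]
  · intro a; rw [hx _ (e a).2]; exact ⟨hxm _ (e a).2, hmx _ (e a).2⟩
  · intro a b
    exact (g.mem_language_iff _).mpr ((hctx _ (e a).2).trans_middle (hchx _ (e b).2))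

/-- The interchange lemma for context-free languages (Ogden–Ross–Winklmann): for each
context-free `L` there is `c > 0` such that for all `n ≥ 2`, every set `R` of words of
`L` of length `n`, and every `m` with `2 ≤ m ≤ n`, there are `k ≥ |R|/(c(n+1)²)` words
`z 0, …, z (k-1)` of `R` (pairwise distinct), with decompositions
`z i = w i ++ x i ++ y i` such that the `w i` have equal lengths, the `y i` have equal
lengths, the `x i` have equal lengths in the interval `(m/2, m]`, and all interchanges
`w i ++ x j ++ y i` belong to `L`. -/
theorem interchange_lemma {σ : Type} [Fintype σ] (L : Language σ)
    (hL : L.IsContextFree) :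
    ∃ c : ℕ, 0 < c ∧ ∀ n : ℕ, 2 ≤ n → ∀ R : Finset (List σ),
      (∀ z ∈ R, z ∈ L ∧ z.length = n) → ∀ m : ℕ, 2 ≤ m → m ≤ n →
      ∃ (k : ℕ) (z w x y : Fin k → List σ),
        (R.card : ℚ) / ((c : ℚ) * ((n : ℚ) + 1) ^ 2) ≤ (k : ℚ) ∧
        Function.Injective z ∧
        (∀ i, z i ∈ R) ∧
        (∀ i, z i = w i ++ x i ++ y i) ∧
        (∀ i j, (w i).length = (w j).length) ∧
        (∀ i j, (y i).length = (y j).length) ∧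
        (∀ i j, (x i).length = (x j).length) ∧
        (∀ i, m < 2 * (x i).length ∧ (x i).length ≤ m) ∧
        (∀ i j, w i ++ x j ++ y i ∈ L) :=
  interchange_lemma_general L hL
end
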